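/- arXiv:1506.07653 — 4 statements merged into one kernel-verified Lean document; each statement's English description precedes it below -/
import Mathlib

section
/- Let A be a real n×n Hurwitz matrix and S an arbitrary real n×n matrix. Then the integral P := ∫₀^∞ exp(tA) · S · exp(tAᵀ) dt converges, and P satisfies the algebraic Lyapunov equation A·P + P·Aᵀ + S = 0. -/
open Matrix MeasureTheory NormedSpace

attribute [local instance] Matrix.linftyOpNormedAddCommGroup Matrix.linftyOpNormedRing
  Matrix.linftyOpNormedAlgebra

/-- A real square matrix is Hurwitz if every eigenvalue of it, regarded as a complex
matrix, has negative real part. -/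
def Matrix.IsHurwitz {k : Type*} [Fintype k] [DecidableEq k] (A : Matrix k k ℝ) : Prop :=
  ∀ z ∈ spectrum ℂ (A.map (algebraMap ℝ ℂ)), z.re < 0

namespace LyapAux
variable {n : ℕ}

/-- Bound for a vector in a generalized eigenspace. -/
lemma key (M : Matrix (Fin n) (Fin n) ℂ) {ε : ℝ} (hε : 0 < ε)
    {μ : ℂ} (hμ : μ.re ≤ -(2 * ε)) {v : Fin n → ℂ}
    (hv : ∃ k : ℕ, ((Matrix.toLinAlgEquiv' M - μ • 1) ^ k) v = 0) :
    ∃ C : ℝ, ∀ t : ℝ, 0 ≤ t → ‖NormedSpace.exp (t • M) *ᵥ v‖ ≤ C * Real.exp (-(ε * t)) := by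
  obtain ⟨K, hK⟩ := hv
  set N : Matrix (Fin n) (Fin n) ℂ := M - μ • 1 with hNdef
  have hNK : N ^ K *ᵥ v = 0 := by
    have h1 : Matrix.toLinAlgEquiv' N = Matrix.toLinAlgEquiv' M - μ • 1 := by
      simp [hNdef, map_sub]
    have h2 : Matrix.toLinAlgEquiv' (N ^ K) v = 0 := by
      rw [map_pow, h1]; exact hK
    rwa [Matrix.toLinAlgEquiv'_apply] at h2
  have hNk : ∀ k : ℕ, K ≤ k → N ^ k *ᵥ v = 0 := by
    intro k hk
    have : N ^ k = N ^ (k - K) * N ^ K := by rw [← pow_add]; congr 1; omega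
    rw [this, ← Matrix.mulVec_mulVec, hNK, Matrix.mulVec_zero]
  have hexp : ∀ t : ℝ, NormedSpace.exp (t • M) *ᵥ v
      = Complex.exp (t * μ) •
        ∑ k ∈ Finset.range K, (((k : ℕ).factorial : ℂ)⁻¹ * (t : ℂ) ^ k) • (N ^ k *ᵥ v) := by
    intro t
    have hsmul : t • M = ((t : ℂ) * μ) • (1 : Matrix (Fin n) (Fin n) ℂ) + (t : ℂ) • N := by
      ext i j
      simp [hNdef, Matrix.smul_apply, Matrix.sub_apply, Matrix.one_apply, Complex.real_smul]
      ring_nf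
      rcases eq_or_ne i j with h | h <;> simp [h] <;> ring
    have hcomm : Commute (((t : ℂ) * μ) • (1 : Matrix (Fin n) (Fin n) ℂ)) ((t : ℂ) • N) :=
      (Commute.one_left _).smul_left _
    rw [hsmul, Matrix.exp_add_of_commute _ _ hcomm]
    have hscal : NormedSpace.exp (((t : ℂ) * μ) • (1 : Matrix (Fin n) (Fin n) ℂ))
        = Complex.exp ((t : ℂ) * μ) • (1 : Matrix (Fin n) (Fin n) ℂ) := by
      have := algebraMap_exp_comm (𝕂 := ℂ) (𝔸 := Matrix (Fin n) (Fin n) ℂ) ((t : ℂ) * μ)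
      rw [← Algebra.algebraMap_eq_smul_one, ← Algebra.algebraMap_eq_smul_one, Complex.exp_eq_exp_ℂ]
      exact this.symm
    rw [hscal, smul_mul_assoc, one_mul, Matrix.smul_mulVec]
    congr 1
    -- NormedSpace.exp ((t:ℂ) • N) *ᵥ v = ∑ ...
    let Φ₀ : Matrix (Fin n) (Fin n) ℂ →ₗ[ℂ] (Fin n → ℂ) :=
      { toFun := fun X => X *ᵥ v
        map_add' := fun X Y => Matrix.add_mulVec X Y v
        map_smul' := fun c X => Matrix.smul_mulVec c X v }
    have hΦ : NormedSpace.exp ((t : ℂ) • N) *ᵥ v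
        = ∑' k : ℕ, ((k.factorial : ℂ)⁻¹ • (((t : ℂ) • N) ^ k *ᵥ v)) := by
      have := (Φ₀.toContinuousLinearMap).map_tsum (expSeries_summable' (𝕂 := ℂ) ((t : ℂ) • N))
      refine (congrArg (· *ᵥ v) (congrFun (exp_eq_tsum (𝕂 := ℂ)) ((t : ℂ) • N))).trans ?_
      simpa [Φ₀, Matrix.smul_mulVec] using this
    rw [hΦ]
    have hterm : ∀ k : ℕ, ((k.factorial : ℂ)⁻¹ • (((t : ℂ) • N) ^ k *ᵥ v))
        = ((k.factorial : ℂ)⁻¹ * (t : ℂ) ^ k) • (N ^ k *ᵥ v) := by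
      intro k
      rw [smul_pow, Matrix.smul_mulVec, smul_smul]
    simp_rw [hterm]
    exact tsum_eq_sum (fun k hk => by
      rw [hNk k (by simpa using hk), smul_zero])
  refine ⟨∑ k ∈ Finset.range K, ε⁻¹ ^ k * ‖N ^ k *ᵥ v‖, fun t ht => ?_⟩
  rw [hexp t, norm_smul]
  have habs : ‖Complex.exp (t * μ)‖ = Real.exp (t * μ.re) := by
    rw [Complex.norm_exp]
    congr 1
    simp [Complex.mul_re]
  rw [habs]
  calc Real.exp (t * μ.re) * ‖∑ k ∈ Finset.range K,
        (((k : ℕ).factorial : ℂ)⁻¹ * (t : ℂ) ^ k) • (N ^ k *ᵥ v)‖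
      ≤ Real.exp (t * μ.re) * ∑ k ∈ Finset.range K,
          ((k.factorial : ℝ)⁻¹ * t ^ k) * ‖N ^ k *ᵥ v‖ := by
        refine mul_le_mul_of_nonneg_left ?_ (Real.exp_nonneg _)
        refine (norm_sum_le _ _).trans (Finset.sum_le_sum fun k _ => ?_)
        rw [norm_smul]
        apply mul_le_mul_of_nonneg_right _ (norm_nonneg _)
        rw [norm_mul, norm_pow]
        simp [Complex.norm_real, abs_of_nonneg ht]
    _ ≤ ∑ k ∈ Finset.range K, (ε⁻¹ ^ k * ‖N ^ k *ᵥ v‖) * Real.exp (-(ε * t)) := by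
        rw [Finset.mul_sum]
        refine Finset.sum_le_sum fun k _ => ?_
        have h1 : (k.factorial : ℝ)⁻¹ * t ^ k ≤ ε⁻¹ ^ k * Real.exp (ε * t) := by
          have := Real.pow_div_factorial_le_exp (ε * t) (by positivity) k
          rw [div_le_iff₀ (by positivity)] at this
          calc (k.factorial : ℝ)⁻¹ * t ^ k = (ε * t) ^ k / k.factorial * ε⁻¹ ^ k := by
                rw [mul_pow, mul_comm ((ε ^ k * t ^ k) / (k.factorial : ℝ)), ← mul_div_assoc, ← mul_assoc,
                  ← mul_pow, inv_mul_cancel₀ hε.ne', one_pow, one_mul, div_eq_inv_mul]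
            _ ≤ Real.exp (ε * t) * ε⁻¹ ^ k := by
                apply mul_le_mul_of_nonneg_right _ (by positivity)
                exact Real.pow_div_factorial_le_exp (ε * t) (by positivity) k
            _ = ε⁻¹ ^ k * Real.exp (ε * t) := mul_comm _ _
        have h2 : Real.exp (t * μ.re) ≤ Real.exp (-(2 * ε) * t) := by
          apply Real.exp_le_exp.mpr
          rw [mul_comm]
          exact mul_le_mul_of_nonneg_right hμ ht
        calc Real.exp (t * μ.re) * ((k.factorial : ℝ)⁻¹ * t ^ k * ‖N ^ k *ᵥ v‖)
            ≤ Real.exp (-(2 * ε) * t) * ((ε⁻¹ ^ k * Real.exp (ε * t)) * ‖N ^ k *ᵥ v‖) := by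
              apply mul_le_mul h2 (mul_le_mul_of_nonneg_right h1 (norm_nonneg _))
                (by positivity) (Real.exp_nonneg _)
          _ = (ε⁻¹ ^ k * ‖N ^ k *ᵥ v‖) * (Real.exp (-(2 * ε) * t) * Real.exp (ε * t)) := by
              ring
          _ = (ε⁻¹ ^ k * ‖N ^ k *ᵥ v‖) * Real.exp (-(ε * t)) := by
              rw [← Real.exp_add]; ring_nf
    _ = (∑ k ∈ Finset.range K, ε⁻¹ ^ k * ‖N ^ k *ᵥ v‖) * Real.exp (-(ε * t)) := by
        rw [Finset.sum_mul]


lemma vec_decay (M : Matrix (Fin n) (Fin n) ℂ) {ε : ℝ} (hε : 0 < ε)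
    (hspec : ∀ z ∈ spectrum ℂ M, z.re ≤ -(2 * ε)) (x : Fin n → ℂ) :
    ∃ C : ℝ, ∀ t : ℝ, 0 ≤ t → ‖NormedSpace.exp (t • M) *ᵥ x‖ ≤ C * Real.exp (-(ε * t)) := by
  set T := Matrix.toLinAlgEquiv' M with hT
  have htop := Module.End.iSup_maxGenEigenspace_eq_top (K := ℂ) T
  have hx : x ∈ ⨆ μ : ℂ, Module.End.maxGenEigenspace T μ := htop ▸ Submodule.mem_top
  rw [Submodule.mem_iSup_iff_exists_finsupp] at hx
  obtain ⟨f, hf, hsum⟩ := hx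
  have hterm : ∀ μ : ℂ, ∃ C : ℝ, ∀ t : ℝ, 0 ≤ t →
      ‖NormedSpace.exp (t • M) *ᵥ f μ‖ ≤ C * Real.exp (-(ε * t)) := by
    intro μ
    by_cases h0 : f μ = 0
    · exact ⟨0, fun t ht => by simp [h0, Matrix.mulVec_zero]⟩
    · obtain ⟨k, hk⟩ := (Module.End.mem_maxGenEigenspace T μ (f μ)).mp (hf μ)
      have hμspec : μ ∈ spectrum ℂ M := by
        have hgen : Module.End.HasGenEigenvalue T μ k := by
          rw [Module.End.hasGenEigenvalue_iff]
          refine (Submodule.ne_bot_iff _).mpr ⟨f μ, ?_, h0⟩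
          exact (Module.End.mem_genEigenspace).mpr ⟨k, le_refl _, hk⟩
        have := (Module.End.hasEigenvalue_of_hasGenEigenvalue hgen).mem_spectrum
        rwa [hT, AlgEquiv.spectrum_eq] at this
      exact key M hε (hspec μ hμspec) ⟨k, hk⟩
  choose C hC using hterm
  refine ⟨∑ μ ∈ f.support, C μ, fun t ht => ?_⟩
  have hxeq : x = ∑ μ ∈ f.support, f μ := by
    rw [← hsum]; rfl
  calc ‖NormedSpace.exp (t • M) *ᵥ x‖ = ‖∑ μ ∈ f.support, NormedSpace.exp (t • M) *ᵥ f μ‖ := by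
        rw [hxeq]
        congr 1
        have := map_sum (Matrix.mulVecLin (NormedSpace.exp (t • M))) (fun μ => f μ) f.support
        simpa only [Matrix.mulVecLin_apply] using this
    _ ≤ ∑ μ ∈ f.support, ‖NormedSpace.exp (t • M) *ᵥ f μ‖ := norm_sum_le _ _
    _ ≤ ∑ μ ∈ f.support, C μ * Real.exp (-(ε * t)) :=
        Finset.sum_le_sum fun μ _ => hC μ t ht
    _ = (∑ μ ∈ f.support, C μ) * Real.exp (-(ε * t)) := by rw [Finset.sum_mul]

lemma norm_le_sum_cols (X : Matrix (Fin n) (Fin n) ℂ) :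
    ‖X‖ ≤ ∑ j : Fin n, ‖X *ᵥ Pi.single j 1‖ := by
  have hnn : ‖X‖₊ ≤ ∑ j : Fin n, ‖X *ᵥ Pi.single j 1‖₊ := by
    rw [Matrix.linfty_opNNNorm_def]
    refine Finset.sup_le fun i _ => ?_
    refine Finset.sum_le_sum fun j _ => ?_
    have : ‖(X *ᵥ Pi.single j 1) i‖₊ ≤ ‖X *ᵥ Pi.single j 1‖₊ := nnnorm_le_pi_nnnorm _ i
    simpa [Matrix.mulVec_single] using this
  calc ‖X‖ = ((‖X‖₊ : ℝ)) := rfl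
    _ ≤ ((∑ j : Fin n, ‖X *ᵥ Pi.single j 1‖₊ : NNReal) : ℝ) := by exact_mod_cast hnn
    _ = ∑ j : Fin n, ‖X *ᵥ Pi.single j 1‖ := by push_cast; rfl

lemma mat_decay (M : Matrix (Fin n) (Fin n) ℂ) {ε : ℝ} (hε : 0 < ε)
    (hspec : ∀ z ∈ spectrum ℂ M, z.re ≤ -(2 * ε)) :
    ∃ C : ℝ, ∀ t : ℝ, 0 ≤ t → ‖NormedSpace.exp (t • M)‖ ≤ C * Real.exp (-(ε * t)) := by
  choose C hC using fun j : Fin n => vec_decay M hε hspec (Pi.single j 1)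
  refine ⟨∑ j : Fin n, C j, fun t ht => ?_⟩
  calc ‖NormedSpace.exp (t • M)‖ ≤ ∑ j : Fin n, ‖NormedSpace.exp (t • M) *ᵥ Pi.single j 1‖ := norm_le_sum_cols _
    _ ≤ ∑ j : Fin n, C j * Real.exp (-(ε * t)) := Finset.sum_le_sum fun j _ => hC j t ht
    _ = (∑ j : Fin n, C j) * Real.exp (-(ε * t)) := by rw [Finset.sum_mul]


lemma spectrum_gap (M : Matrix (Fin n) (Fin n) ℂ) (hB : ∀ z ∈ spectrum ℂ M, z.re < 0) :
    ∃ ε : ℝ, 0 < ε ∧ ∀ z ∈ spectrum ℂ M, z.re ≤ -(2 * ε) := by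
  rcases (spectrum ℂ M).eq_empty_or_nonempty with h | h
  · exact ⟨1, one_pos, fun z hz => absurd hz (h ▸ Set.notMem_empty z)⟩
  · obtain ⟨z₀, hz₀, hmax⟩ := (spectrum.isCompact M).exists_isMaxOn h
      Complex.continuous_re.continuousOn
    refine ⟨-z₀.re / 2, by linarith [hB z₀ hz₀], fun z hz => ?_⟩
    have h2 := hmax hz
    simp only [Set.mem_setOf_eq] at h2
    linarith

lemma decay (B : Matrix (Fin n) (Fin n) ℝ)
    (hB : ∀ z ∈ spectrum ℂ (B.map (algebraMap ℝ ℂ)), z.re < 0) :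
    ∃ ε : ℝ, 0 < ε ∧ ∃ C : ℝ, ∀ t : ℝ, 0 ≤ t → ‖NormedSpace.exp (t • B)‖ ≤ C * Real.exp (-(ε * t)) := by
  obtain ⟨ε, hε, hspec⟩ := spectrum_gap _ hB
  obtain ⟨C, hC⟩ := mat_decay (B.map (algebraMap ℝ ℂ)) hε hspec
  refine ⟨ε, hε, C, fun t ht => ?_⟩
  have hmapexp : (NormedSpace.exp (t • B)).map (algebraMap ℝ ℂ)
      = NormedSpace.exp (t • B.map (algebraMap ℝ ℂ)) := by
    have hcont : Continuous fun X : Matrix (Fin n) (Fin n) ℝ =>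
        ((algebraMap ℝ ℂ).mapMatrix X) :=
      continuous_id.matrix_map Complex.continuous_ofReal
    have h1 := map_exp ((algebraMap ℝ ℂ).mapMatrix) hcont (t • B)
    have h2 : ((algebraMap ℝ ℂ).mapMatrix) (t • B) = t • B.map (algebraMap ℝ ℂ) := by
      ext i j
      simp [RingHom.mapMatrix_apply, Matrix.map_apply, Complex.real_smul]
    have h3 : (NormedSpace.exp : Matrix (Fin n) (Fin n) ℂ → Matrix (Fin n) (Fin n) ℂ) = NormedSpace.exp :=
      rfl
    calc (NormedSpace.exp (t • B)).map (algebraMap ℝ ℂ)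
        = ((algebraMap ℝ ℂ).mapMatrix) (NormedSpace.exp (t • B)) := rfl
      _ = NormedSpace.exp (((algebraMap ℝ ℂ).mapMatrix) (t • B)) := h1
      _ = NormedSpace.exp (t • B.map (algebraMap ℝ ℂ)) := by rw [h2, h3]
  have hnorm : ‖(NormedSpace.exp (t • B)).map (algebraMap ℝ ℂ)‖ = ‖NormedSpace.exp (t • B)‖ := by
    have hnn : ∀ Y : Matrix (Fin n) (Fin n) ℝ, ‖Y.map (algebraMap ℝ ℂ)‖₊ = ‖Y‖₊ := by
      intro Y
      rw [Matrix.linfty_opNNNorm_def, Matrix.linfty_opNNNorm_def]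
      congr 1
      funext i
      congr 1
      funext j
      simp [Matrix.map_apply]
    calc ‖(NormedSpace.exp (t • B)).map (algebraMap ℝ ℂ)‖
        = ((‖(NormedSpace.exp (t • B)).map (algebraMap ℝ ℂ)‖₊ : NNReal) : ℝ) := rfl
      _ = ((‖NormedSpace.exp (t • B)‖₊ : NNReal) : ℝ) := by rw [hnn]
      _ = ‖NormedSpace.exp (t • B)‖ := rfl
  rw [← hnorm, hmapexp]
  exact hC t ht

lemma spectrum_transpose (M : Matrix (Fin n) (Fin n) ℂ) :
    spectrum ℂ Mᵀ = spectrum ℂ M := by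
  ext z
  rw [spectrum.mem_iff, spectrum.mem_iff]
  have htr : algebraMap ℂ (Matrix (Fin n) (Fin n) ℂ) z - Mᵀ
      = (algebraMap ℂ (Matrix (Fin n) (Fin n) ℂ) z - M)ᵀ := by
    rw [Matrix.transpose_sub]
    congr 1
    simp [Algebra.algebraMap_eq_smul_one, Matrix.transpose_smul]
  rw [htr, Matrix.isUnit_iff_isUnit_det, Matrix.det_transpose, ← Matrix.isUnit_iff_isUnit_det]

end LyapAux

/-- For a Hurwitz matrix `A` and arbitrary `S`, the integral
`P := ∫₀^∞ exp(tA) S exp(tAᵀ) dt` converges and satisfies the algebraic Lyapunov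
equation `A P + P Aᵀ + S = 0`. -/
theorem lyapunov_integral_solves {n : ℕ} (A S : Matrix (Fin n) (Fin n) ℝ)
    (hA : A.IsHurwitz) :
    @IntegrableOn ℝ _ _ _ SeminormedAddGroup.toContinuousENorm (fun t : ℝ => NormedSpace.exp (t • A) * S * NormedSpace.exp (t • Aᵀ)) (Set.Ioi 0) volume ∧
      A * (∫ t in Set.Ioi (0 : ℝ), NormedSpace.exp (t • A) * S * NormedSpace.exp (t • Aᵀ)) +
        (∫ t in Set.Ioi (0 : ℝ), NormedSpace.exp (t • A) * S * NormedSpace.exp (t • Aᵀ)) * Aᵀ + S = 0 := by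
  letI : ContinuousENorm (Matrix (Fin n) (Fin n) ℝ) := SeminormedAddGroup.toContinuousENorm
  letI : TopologicalSpace.PseudoMetrizableSpace (Matrix (Fin n) (Fin n) ℝ) :=
    inferInstanceAs (TopologicalSpace.PseudoMetrizableSpace (Fin n → Fin n → ℝ))
  have hA' : ∀ z ∈ spectrum ℂ (A.map (algebraMap ℝ ℂ)), z.re < 0 := hA
  have hAT : ∀ z ∈ spectrum ℂ (Aᵀ.map (algebraMap ℝ ℂ)), z.re < 0 := by
    intro z hz
    apply hA'
    rwa [Matrix.transpose_map, LyapAux.spectrum_transpose] at hz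
  obtain ⟨ε₁, hε₁, C₁, hC₁⟩ := LyapAux.decay A hA'
  obtain ⟨ε₂, hε₂, C₂, hC₂⟩ := LyapAux.decay Aᵀ hAT
  set F : ℝ → Matrix (Fin n) (Fin n) ℝ :=
    fun t => NormedSpace.exp (t • A) * S * NormedSpace.exp (t • Aᵀ) with hF
  have hbound : ∀ t : ℝ, 0 ≤ t →
      ‖F t‖ ≤ (C₁ * ‖S‖ * C₂) * Real.exp (-((ε₁ + ε₂) * t)) := by
    intro t ht
    have e1 := hC₁ t ht
    have e2 := hC₂ t ht
    have hc₁ : 0 ≤ C₁ * Real.exp (-(ε₁ * t)) := le_trans (norm_nonneg _) e1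
    calc ‖F t‖ ≤ ‖NormedSpace.exp (t • A) * S‖ * ‖NormedSpace.exp (t • Aᵀ)‖ := norm_mul_le _ _
      _ ≤ ‖NormedSpace.exp (t • A)‖ * ‖S‖ * ‖NormedSpace.exp (t • Aᵀ)‖ :=
          mul_le_mul_of_nonneg_right (norm_mul_le _ _) (norm_nonneg _)
      _ ≤ (C₁ * Real.exp (-(ε₁ * t))) * ‖S‖ * (C₂ * Real.exp (-(ε₂ * t))) := by
          apply mul_le_mul
            (mul_le_mul e1 le_rfl (norm_nonneg S) hc₁)
            e2 (norm_nonneg _)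
          positivity
      _ = (C₁ * ‖S‖ * C₂) * (Real.exp (-(ε₁ * t)) * Real.exp (-(ε₂ * t))) := by ring
      _ = (C₁ * ‖S‖ * C₂) * Real.exp (-((ε₁ + ε₂) * t)) := by
          rw [← Real.exp_add]; ring_nf
  have hFcont : Continuous F := by
    have h1 : Continuous fun t : ℝ => NormedSpace.exp (t • A) :=
      exp_continuous.comp (continuous_id.smul continuous_const)
    have h2 : Continuous fun t : ℝ => NormedSpace.exp (t • Aᵀ) :=
      exp_continuous.comp (continuous_id.smul continuous_const)
    exact (h1.mul continuous_const).mul h2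
  have hgint : IntegrableOn
      (fun t => (C₁ * ‖S‖ * C₂) * Real.exp (-((ε₁ + ε₂) * t))) (Set.Ioi 0) volume := by
    have h0 := (exp_neg_integrableOn_Ioi 0 (b := ε₁ + ε₂) (by linarith)).const_mul
      (C₁ * ‖S‖ * C₂)
    simpa only [neg_mul, IntegrableOn] using h0
  have hFint : IntegrableOn F (Set.Ioi 0) volume := by
    refine Integrable.mono' hgint hFcont.aestronglyMeasurable.restrict ?_
    exact (ae_restrict_iff' measurableSet_Ioi).mpr
      (Filter.Eventually.of_forall fun t ht => hbound t (le_of_lt ht))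
  have hderiv : ∀ t : ℝ, HasDerivAt F (A * F t + F t * Aᵀ) t := by
    intro t
    have h1 : HasDerivAt (fun u : ℝ => NormedSpace.exp (u • A)) (A * NormedSpace.exp (t • A)) t :=
      hasDerivAt_exp_smul_const' A t
    have h2 : HasDerivAt (fun u : ℝ => NormedSpace.exp (u • Aᵀ)) (NormedSpace.exp (t • Aᵀ) * Aᵀ) t :=
      hasDerivAt_exp_smul_const Aᵀ t
    have h3 := (h1.mul_const S).mul h2
    refine h3.congr_deriv ?_
    simp only [hF]
    noncomm_ring
  have hi1 : IntegrableOn (fun t => A * F t) (Set.Ioi 0) volume :=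
    (ContinuousLinearMap.mul ℝ (Matrix (Fin n) (Fin n) ℝ) A).integrable_comp hFint
  have hi2 : IntegrableOn (fun t => F t * Aᵀ) (Set.Ioi 0) volume :=
    ((ContinuousLinearMap.mul ℝ (Matrix (Fin n) (Fin n) ℝ)).flip Aᵀ).integrable_comp hFint
  have hFlim : Filter.Tendsto F Filter.atTop (nhds 0) := by
    apply squeeze_zero_norm' (Filter.eventually_atTop.mpr ⟨0, fun t ht => hbound t ht⟩)
    have hexp : Filter.Tendsto (fun t : ℝ => Real.exp (-((ε₁ + ε₂) * t)))
        Filter.atTop (nhds 0) := by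
      have := Real.tendsto_exp_neg_atTop_nhds_zero.comp
        (Filter.Tendsto.const_mul_atTop (by linarith : (0:ℝ) < ε₁ + ε₂) Filter.tendsto_id)
      simpa [Function.comp_def] using this
    simpa using hexp.const_mul (C₁ * ‖S‖ * C₂)
  have hkey : ∫ t in Set.Ioi (0:ℝ), (A * F t + F t * Aᵀ) = 0 - F 0 :=
    integral_Ioi_of_hasDerivAt_of_tendsto' (fun t _ => hderiv t) (hi1.add hi2) hFlim
  have hF0 : F 0 = S := by
    simp [hF]
  have hsplit : ∫ t in Set.Ioi (0:ℝ), (A * F t + F t * Aᵀ)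
      = A * (∫ t in Set.Ioi (0:ℝ), F t) + (∫ t in Set.Ioi (0:ℝ), F t) * Aᵀ := by
    rw [integral_add hi1 hi2]
    congr 1
    · exact (ContinuousLinearMap.mul ℝ (Matrix (Fin n) (Fin n) ℝ) A).integral_comp_comm hFint
    · exact ((ContinuousLinearMap.mul ℝ (Matrix (Fin n) (Fin n) ℝ)).flip Aᵀ).integral_comp_comm
        hFint
  refine ⟨hFint, ?_⟩
  have hfin : A * (∫ t in Set.Ioi (0:ℝ), F t) + (∫ t in Set.Ioi (0:ℝ), F t) * Aᵀ = -S := by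
    rw [← hsplit, hkey, hF0]
    simp
  rw [hfin]
  simp
end

section
/- Let A be a real n×n Hurwitz matrix and S an arbitrary real n×n matrix. Then the algebraic Lyapunov equation A·P + P·Aᵀ + S = 0 has a unique real n×n solution P; that is, if P₁ and P₂ both satisfy the equation then P₁ = P₂, and the unique solution is given by P = ∫₀^∞ exp(tA) · S · exp(tAᵀ) dt. -/
open Matrix MeasureTheory NormedSpace

attribute [local instance] Matrix.linftyOpNormedAddCommGroup Matrix.linftyOpNormedRing
  Matrix.linftyOpNormedAlgebra

namespace LyapunovAux

open Filter

variable {n : ℕ}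

lemma norm_pow_mulVec_le (M : Matrix (Fin n) (Fin n) ℂ) (k : ℕ) :
    ∀ v : Fin n → ℂ, ‖(M ^ k) *ᵥ v‖ ≤ ‖M‖ ^ k * ‖v‖ := by
  induction k with
  | zero => intro v; simp
  | succ k ih =>
    intro v
    rw [pow_succ', ← Matrix.mulVec_mulVec]
    calc ‖M *ᵥ ((M ^ k) *ᵥ v)‖ ≤ ‖M‖ * ‖(M ^ k) *ᵥ v‖ := Matrix.linfty_opNorm_mulVec _ _
    _ ≤ ‖M‖ * (‖M‖ ^ k * ‖v‖) :=
      mul_le_mul_of_nonneg_left (ih v) (norm_nonneg M)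
    _ = ‖M‖ ^ (k + 1) * ‖v‖ := by ring

lemma one_add_le_exp {δ : ℝ} (hδ : 0 < δ) (t : ℝ) (ht : 0 ≤ t) :
    1 + t ≤ max 1 δ⁻¹ * Real.exp (δ * t) := by
  have h1 : 1 + δ * t ≤ Real.exp (δ * t) := by
    have := Real.add_one_le_exp (δ * t); linarith
  have hc1 : (1 : ℝ) ≤ max 1 δ⁻¹ := le_max_left _ _
  have hcδ : 1 ≤ max 1 δ⁻¹ * δ := by
    have : δ⁻¹ ≤ max 1 δ⁻¹ := le_max_right _ _
    have h2 : δ⁻¹ * δ = 1 := inv_mul_cancel₀ hδ.ne'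
    nlinarith
  have key : 1 + t ≤ max 1 δ⁻¹ * (1 + δ * t) := by nlinarith
  calc 1 + t ≤ max 1 δ⁻¹ * (1 + δ * t) := key
  _ ≤ max 1 δ⁻¹ * Real.exp (δ * t) := by
      apply mul_le_mul_of_nonneg_left h1 (by positivity)

lemma vec_decay (B : Matrix (Fin n) (Fin n) ℂ) {μ : ℂ} (hμ : μ.re < 0)
    {v : Fin n → ℂ} (hv : ∃ k : ℕ, ((B - μ • 1) ^ k) *ᵥ v = 0) :
    ∃ C : ℝ, 0 ≤ C ∧ ∀ t : ℝ, 0 ≤ t →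
      ‖exp ((t : ℂ) • B) *ᵥ v‖ ≤ C * Real.exp (μ.re / 2 * t) := by
  obtain ⟨k, hk⟩ := hv
  set N : Matrix (Fin n) (Fin n) ℂ := B - μ • 1 with hN
  -- splitting of the exponential
  have hsplit : ∀ t : ℝ, exp ((t : ℂ) • B)
      = Complex.exp ((t : ℂ) * μ) • exp ((t : ℂ) • N) := by
    intro t
    have hb : (t : ℂ) • B = algebraMap ℂ (Matrix (Fin n) (Fin n) ℂ) ((t : ℂ) * μ)
        + (t : ℂ) • N := by
      rw [Algebra.algebraMap_eq_smul_one, hN]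
      rw [smul_sub, ← add_sub_assoc, smul_smul]
      abel
    have hcomm : Commute (algebraMap ℂ (Matrix (Fin n) (Fin n) ℂ) ((t : ℂ) * μ))
        ((t : ℂ) • N) := Algebra.commutes _ _
    erw [hb, exp_add_of_commute hcomm, ← algebraMap_exp_comm, ← Complex.exp_eq_exp_ℂ,
      Algebra.algebraMap_eq_smul_one, smul_mul_assoc, one_mul]
    rfl
  -- the series applied to v is a finite sum
  have hmv : ∀ t : ℝ, exp ((t : ℂ) • N) *ᵥ v
      = ∑ j ∈ Finset.range k, (((t : ℂ) ^ j * ((j.factorial : ℂ))⁻¹)) • ((N ^ j) *ᵥ v) := by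
    intro t
    let L : Matrix (Fin n) (Fin n) ℂ →ₗ[ℂ] (Fin n → ℂ) :=
      { toFun := fun M => M *ᵥ v
        map_add' := fun x y => Matrix.add_mulVec x y v
        map_smul' := fun c M => Matrix.smul_mulVec c M v }
    let Lc : Matrix (Fin n) (Fin n) ℂ →L[ℂ] (Fin n → ℂ) := LinearMap.toContinuousLinearMap L
    have happ : ∀ M : Matrix (Fin n) (Fin n) ℂ, Lc M = M *ᵥ v := fun _ => rfl
    have hsum := expSeries_summable' (𝕂 := ℂ) ((t : ℂ) • N)
    calc exp ((t : ℂ) • N) *ᵥ v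
        = Lc (∑' j : ℕ, ((j.factorial : ℂ))⁻¹ • ((t : ℂ) • N) ^ j) := by
          rw [happ, exp_eq_tsum ℂ]
    _ = ∑' j : ℕ, Lc (((j.factorial : ℂ))⁻¹ • ((t : ℂ) • N) ^ j) := Lc.map_tsum hsum
    _ = ∑' j : ℕ, (((t : ℂ) ^ j * ((j.factorial : ℂ))⁻¹)) • ((N ^ j) *ᵥ v) := by
          congr 1; funext j
          rw [_root_.map_smul, happ, smul_pow, Matrix.smul_mulVec, smul_smul, mul_comm]
    _ = ∑ j ∈ Finset.range k, (((t : ℂ) ^ j * ((j.factorial : ℂ))⁻¹)) • ((N ^ j) *ᵥ v) := by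
          apply tsum_eq_sum
          intro j hj
          have hjk : k ≤ j := by
            by_contra hlt
            exact hj (Finset.mem_range.mpr (not_le.mp hlt))
          have : (N ^ j) *ᵥ v = 0 := by
            rw [← Nat.sub_add_cancel hjk, pow_add, ← Matrix.mulVec_mulVec, hk,
              Matrix.mulVec_zero]
          rw [this, smul_zero]
  -- constants
  set R : ℝ := ‖N‖ with hR
  set δ : ℝ := -μ.re / (2 * (k + 1)) with hδdef
  have hδ : 0 < δ := by
    rw [hδdef]
    apply div_pos (by linarith) (by positivity)
  set c : ℝ := max 1 δ⁻¹ with hc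
  have hc0 : 0 ≤ c := le_trans zero_le_one (le_max_left _ _)
  refine ⟨(k * (1 + R) ^ k * ‖v‖) * c ^ k, by positivity, fun t ht => ?_⟩
  have hR0 : 0 ≤ R := norm_nonneg _
  -- bound the finite sum
  have hsumbound : ‖exp ((t : ℂ) • N) *ᵥ v‖ ≤ (k * (1 + R) ^ k * ‖v‖) * (1 + t) ^ k := by
    have hterm : ∀ j ∈ Finset.range k,
        ‖(((t : ℂ) ^ j * ((j.factorial : ℂ))⁻¹)) • ((N ^ j) *ᵥ v)‖
          ≤ (1 + t) ^ k * ((1 + R) ^ k * ‖v‖) := by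
      intro j hj
      have hjk : j ≤ k := (Finset.mem_range.mp hj).le
      rw [norm_smul]
      have hsc : ‖(t : ℂ) ^ j * ((j.factorial : ℂ))⁻¹‖ ≤ (1 + t) ^ k := by
        rw [norm_mul, norm_pow]
        have h1 : ‖(t : ℂ)‖ = t := by
          rw [Complex.norm_real, Real.norm_of_nonneg ht]
        have h2 : ‖((j.factorial : ℂ))⁻¹‖ ≤ 1 := by
          rw [norm_inv]
          apply inv_le_one_of_one_le₀
          rw [Complex.norm_natCast]
          exact_mod_cast j.factorial_pos
        calc ‖(t:ℂ)‖ ^ j * ‖((j.factorial : ℂ))⁻¹‖ ≤ ‖(t:ℂ)‖ ^ j * 1 := by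
              apply mul_le_mul_of_nonneg_left h2 (by positivity)
        _ = t ^ j := by rw [mul_one, h1]
        _ ≤ (1 + t) ^ j := pow_le_pow_left₀ ht (by linarith) j
        _ ≤ (1 + t) ^ k := pow_le_pow_right₀ (by linarith) hjk
      have hvec : ‖(N ^ j) *ᵥ v‖ ≤ (1 + R) ^ k * ‖v‖ := by
        calc ‖(N ^ j) *ᵥ v‖ ≤ ‖N‖ ^ j * ‖v‖ := norm_pow_mulVec_le N j v
        _ ≤ (1 + R) ^ k * ‖v‖ := by
            apply mul_le_mul_of_nonneg_right _ (norm_nonneg v)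
            calc R ^ j ≤ (1 + R) ^ j := pow_le_pow_left₀ hR0 (by linarith) j
            _ ≤ (1 + R) ^ k := pow_le_pow_right₀ (by linarith) hjk
      exact mul_le_mul hsc hvec (norm_nonneg _) (by positivity)
    rw [hmv t]
    calc ‖∑ j ∈ Finset.range k, (((t : ℂ) ^ j * ((j.factorial : ℂ))⁻¹)) • ((N ^ j) *ᵥ v)‖
        ≤ ∑ j ∈ Finset.range k, ‖(((t : ℂ) ^ j * ((j.factorial : ℂ))⁻¹)) • ((N ^ j) *ᵥ v)‖ :=
          norm_sum_le _ _
    _ ≤ ∑ _j ∈ Finset.range k, ((1 + t) ^ k * ((1 + R) ^ k * ‖v‖)) :=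
          Finset.sum_le_sum hterm
    _ = k * ((1 + t) ^ k * ((1 + R) ^ k * ‖v‖)) := by
          rw [Finset.sum_const, Finset.card_range, nsmul_eq_mul]
    _ = (k * (1 + R) ^ k * ‖v‖) * (1 + t) ^ k := by ring
  -- combine with the exponential factor
  have hkδ : μ.re + k * δ ≤ μ.re / 2 := by
    have hkd : (k:ℝ) * δ ≤ -μ.re / 2 := by
      have heq : (k:ℝ) * δ = ((k:ℝ) * (-μ.re)) / (2 * ((k:ℝ) + 1)) := by
        rw [hδdef]; ring
      rw [heq, div_le_div_iff₀ (by positivity) (by norm_num : (0:ℝ) < 2)]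
      have hk0 : (0:ℝ) ≤ (k:ℝ) := Nat.cast_nonneg k
      nlinarith
    linarith
  have hpow : (1 + t) ^ k ≤ c ^ k * Real.exp (k * δ * t) := by
    calc (1 + t) ^ k ≤ (c * Real.exp (δ * t)) ^ k := by
          apply pow_le_pow_left₀ (by linarith) (one_add_le_exp hδ t ht)
    _ = c ^ k * Real.exp (δ * t) ^ k := mul_pow _ _ _
    _ = c ^ k * Real.exp (k * δ * t) := by
          rw [← Real.exp_nat_mul]; ring_nf
  have hnormexp : ‖Complex.exp ((t : ℂ) * μ)‖ = Real.exp (t * μ.re) := by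
    rw [Complex.norm_exp]
    congr 1
    simp [Complex.mul_re]
  rw [hsplit t, Matrix.smul_mulVec, norm_smul, hnormexp]
  calc Real.exp (t * μ.re) * ‖exp ((t : ℂ) • N) *ᵥ v‖
      ≤ Real.exp (t * μ.re) * ((k * (1 + R) ^ k * ‖v‖) * (1 + t) ^ k) := by
        apply mul_le_mul_of_nonneg_left hsumbound (Real.exp_nonneg _)
  _ ≤ Real.exp (t * μ.re) * ((k * (1 + R) ^ k * ‖v‖) * (c ^ k * Real.exp (k * δ * t))) := by
        apply mul_le_mul_of_nonneg_left _ (Real.exp_nonneg _)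
        apply mul_le_mul_of_nonneg_left hpow (by positivity)
  _ = ((k * (1 + R) ^ k * ‖v‖) * c ^ k) * Real.exp (t * μ.re + k * δ * t) := by
        rw [Real.exp_add]; ring
  _ ≤ ((k * (1 + R) ^ k * ‖v‖) * c ^ k) * Real.exp (μ.re / 2 * t) := by
        apply mul_le_mul_of_nonneg_left _ (by positivity)
        apply Real.exp_le_exp.mpr
        have : t * μ.re + k * δ * t = (μ.re + k * δ) * t := by ring
        rw [this]
        apply mul_le_mul_of_nonneg_right hkδ ht

lemma norm_le_sum_cols (M : Matrix (Fin n) (Fin n) ℂ) :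
    ‖M‖ ≤ ∑ j, ‖M *ᵥ Pi.single j 1‖ := by
  have hnn : ‖M‖₊ ≤ ∑ j, ‖M *ᵥ Pi.single j 1‖₊ := by
    rw [Matrix.linfty_opNNNorm_def]
    apply Finset.sup_le
    intro i _
    apply Finset.sum_le_sum
    intro j _
    calc ‖M i j‖₊ = ‖(M *ᵥ Pi.single j 1) i‖₊ := by
          simp [Matrix.mulVec_single]
    _ ≤ ‖M *ᵥ Pi.single j 1‖₊ := nnnorm_le_pi_nnnorm _ i
  have hcoe := NNReal.coe_le_coe.mpr hnn
  simpa [coe_nnnorm, NNReal.coe_sum] using hcoe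

lemma mat_decay (B : Matrix (Fin n) (Fin n) ℂ) (hB : ∀ z ∈ spectrum ℂ B, z.re < 0) :
    ∃ C ε : ℝ, 0 < ε ∧ ∀ t : ℝ, 0 ≤ t →
      ‖exp ((t : ℂ) • B)‖ ≤ C * Real.exp (-ε * t) := by
  rcases Nat.eq_zero_or_pos n with rfl | hn
  · refine ⟨1, 1, one_pos, fun t ht => ?_⟩
    have h0 : exp ((t : ℂ) • B) = 0 := by
      ext i j; exact i.elim0
    rw [h0, norm_zero]
    positivity
  · classical
    haveI : Nonempty (Fin n) := ⟨⟨0, hn⟩⟩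
    set f : Module.End ℂ (Fin n → ℂ) := Matrix.toLinAlgEquiv' B with hf
    have hInt : DirectSum.IsInternal f.maxGenEigenspace :=
      DirectSum.isInternal_submodule_of_iSupIndep_of_iSup_eq_top
        f.independent_maxGenEigenspace f.iSup_maxGenEigenspace_eq_top
    let bs : ∀ μ : ℂ, Module.Basis _ ℂ (f.maxGenEigenspace μ) := fun μ => Module.Basis.ofVectorSpace ℂ _
    let b := hInt.collectedBasis bs
    haveI : Fintype ((μ : ℂ) × Module.Basis.ofVectorSpaceIndex ℂ (f.maxGenEigenspace μ)) :=
      FiniteDimensional.fintypeBasisIndex b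
    haveI hne : Nonempty ((μ : ℂ) × Module.Basis.ofVectorSpaceIndex ℂ (f.maxGenEigenspace μ)) :=
      b.index_nonempty
    -- each eigenvalue appearing has negative real part
    have hnil : ∀ i : (μ : ℂ) × Module.Basis.ofVectorSpaceIndex ℂ (f.maxGenEigenspace μ),
        ∃ k : ℕ, ((B - i.1 • 1) ^ k) *ᵥ (b i) = 0 := by
      intro i
      have hmem : b i ∈ f.maxGenEigenspace i.1 := hInt.collectedBasis_mem bs i
      obtain ⟨k, hk⟩ := (f.mem_maxGenEigenspace i.1 (b i)).mp hmem
      refine ⟨k, ?_⟩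
      have heq : f - i.1 • 1 = Matrix.toLinAlgEquiv' (B - i.1 • 1) := by
        simp [hf, map_sub, _root_.map_smul, _root_.map_one]
      have heq2 : ((f - i.1 • 1) ^ k) (b i)
          = ((B - i.1 • 1) ^ k) *ᵥ (b i) := by
        rw [heq, ← map_pow]
        rfl
      rw [← heq2]
      exact hk
    have hre : ∀ i : (μ : ℂ) × Module.Basis.ofVectorSpaceIndex ℂ (f.maxGenEigenspace μ),
        i.1.re < 0 := by
      intro i
      apply hB
      rw [← AlgEquiv.spectrum_eq (Matrix.toLinAlgEquiv' (R := ℂ) (n := Fin n)) B,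
        spectrum.mem_iff]
      intro hu
      obtain ⟨k, hk⟩ := hnil i
      have hu2 : IsUnit ((f - i.1 • 1) ^ k) := by
        have h1 : f - i.1 • 1
            = -(algebraMap ℂ (Module.End ℂ (Fin n → ℂ)) i.1 - f) := by
          rw [Algebra.algebraMap_eq_smul_one, neg_sub]
        rw [h1]
        exact (hu.neg).pow k
      obtain ⟨u, hu3⟩ := hu2
      have hb0 : b i = 0 := by
        have h4 : ((f - i.1 • 1) ^ k) (b i) = 0 := by
          have heq : f - i.1 • 1 = Matrix.toLinAlgEquiv' (B - i.1 • 1) := by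
            simp [hf, map_sub, _root_.map_smul, _root_.map_one]
          rw [heq, ← map_pow]
          exact hk
        have h6 : ((↑u⁻¹ : Module.End ℂ (Fin n → ℂ)) * ((f - i.1 • 1) ^ k)) = 1 := by
          rw [← hu3]
          exact u.inv_mul
        calc b i = (((↑u⁻¹ : Module.End ℂ (Fin n → ℂ)) * ((f - i.1 • 1) ^ k))) (b i) := by
              rw [h6]; rfl
        _ = (↑u⁻¹ : Module.End ℂ (Fin n → ℂ)) (((f - i.1 • 1) ^ k) (b i)) := rfl
        _ = 0 := by rw [h4, map_zero]
      exact b.ne_zero i hb0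
    -- per-basis-vector decay
    have hdec := fun i : (μ : ℂ) × Module.Basis.ofVectorSpaceIndex ℂ (f.maxGenEigenspace μ) =>
      vec_decay B (hre i) (hnil i)
    choose Ci hCi0 hCi using hdec
    -- uniform rate
    set ε : ℝ := Finset.univ.inf'
      (Finset.univ_nonempty) (fun i : (μ : ℂ) × Module.Basis.ofVectorSpaceIndex ℂ (f.maxGenEigenspace μ) => -(i.1.re) / 2) with hε
    have hεpos : 0 < ε := by
      rw [hε]
      apply Finset.lt_inf'_iff _ |>.mpr
      intro i _
      have := hre i
      linarith
    have hεle : ∀ i : (μ : ℂ) × Module.Basis.ofVectorSpaceIndex ℂ (f.maxGenEigenspace μ),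
        i.1.re / 2 ≤ -ε := by
      intro i
      have := Finset.inf'_le (fun i : (μ : ℂ) × Module.Basis.ofVectorSpaceIndex ℂ (f.maxGenEigenspace μ) => -(i.1.re) / 2) (Finset.mem_univ i)
      rw [hε]
      linarith
    -- column bound
    have hcol : ∀ (j : Fin n) (t : ℝ), 0 ≤ t →
        ‖exp ((t : ℂ) • B) *ᵥ Pi.single j 1‖
          ≤ (∑ i, ‖(b.repr (Pi.single j 1)) i‖ * Ci i) * Real.exp (-ε * t) := by
      intro j t ht
      have hw := b.sum_repr (Pi.single j 1)
      have hmvs : exp ((t : ℂ) • B) *ᵥ Pi.single j 1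
          = ∑ i, (b.repr (Pi.single j 1)) i • (exp ((t : ℂ) • B) *ᵥ b i) := by
        conv_lhs => rw [← hw]
        rw [show ∀ w, exp ((t : ℂ) • B) *ᵥ w = Matrix.mulVecLin (exp ((t : ℂ) • B)) w
          from fun _ => rfl]
        rw [map_sum]
        simp [_root_.map_smul]
      rw [hmvs]
      calc ‖∑ i, (b.repr (Pi.single j 1)) i • (exp ((t : ℂ) • B) *ᵥ b i)‖
          ≤ ∑ i, ‖(b.repr (Pi.single j 1)) i • (exp ((t : ℂ) • B) *ᵥ b i)‖ :=
            norm_sum_le _ _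
      _ ≤ ∑ i, ‖(b.repr (Pi.single j 1)) i‖ * (Ci i * Real.exp (-ε * t)) := by
          apply Finset.sum_le_sum
          intro i _
          rw [norm_smul]
          apply mul_le_mul_of_nonneg_left _ (norm_nonneg _)
          calc ‖exp ((t : ℂ) • B) *ᵥ b i‖ ≤ Ci i * Real.exp (i.1.re / 2 * t) :=
                hCi i t ht
          _ ≤ Ci i * Real.exp (-ε * t) := by
              apply mul_le_mul_of_nonneg_left _ (hCi0 i)
              apply Real.exp_le_exp.mpr
              exact mul_le_mul_of_nonneg_right (hεle i) ht
      _ = (∑ i, ‖(b.repr (Pi.single j 1)) i‖ * Ci i) * Real.exp (-ε * t) := by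
          rw [Finset.sum_mul]
          congr 1; funext i; ring
    refine ⟨∑ j, ∑ i, ‖(b.repr (Pi.single j 1)) i‖ * Ci i, ε, hεpos, fun t ht => ?_⟩
    calc ‖exp ((t : ℂ) • B)‖ ≤ ∑ j, ‖exp ((t : ℂ) • B) *ᵥ Pi.single j 1‖ :=
          norm_le_sum_cols _
    _ ≤ ∑ j, (∑ i, ‖(b.repr (Pi.single j 1)) i‖ * Ci i) * Real.exp (-ε * t) :=
          Finset.sum_le_sum fun j _ => hcol j t ht
    _ = (∑ j, ∑ i, ‖(b.repr (Pi.single j 1)) i‖ * Ci i) * Real.exp (-ε * t) := by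
          rw [Finset.sum_mul]

lemma exp_map_complex (A : Matrix (Fin n) (Fin n) ℝ) (t : ℝ) :
    (exp (t • A)).map (algebraMap ℝ ℂ)
      = exp ((t : ℂ) • (A.map (algebraMap ℝ ℂ))) := by
  have hcont : Continuous (Complex.ofRealAm.mapMatrix (m := Fin n)) := by
    have := LinearMap.continuous_of_finiteDimensional
      (Complex.ofRealAm.mapMatrix (m := Fin n)).toLinearMap
    exact this
  have h1 := map_exp (Complex.ofRealAm.mapMatrix (m := Fin n)) hcont (t • A)
  have h2 : (Complex.ofRealAm.mapMatrix (m := Fin n)) (t • A)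
      = (t : ℂ) • (A.map (algebraMap ℝ ℂ)) := by
    ext i j
    simp [AlgHom.mapMatrix_apply, Matrix.map_apply, Complex.ofRealAm, Matrix.smul_apply,
      Complex.ofReal_mul, Algebra.ofId_apply, Algebra.algebraMap_eq_smul_one]
  have h3 : (exp (t • A)).map (algebraMap ℝ ℂ)
      = (Complex.ofRealAm.mapMatrix (m := Fin n)) (exp (t • A)) := by
    ext i j
    simp [AlgHom.mapMatrix_apply, Matrix.map_apply, Complex.ofRealAm, Algebra.ofId_apply,
      Algebra.algebraMap_eq_smul_one]
  erw [h3, h1, h2]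
  rfl

lemma norm_map_complex (M : Matrix (Fin n) (Fin n) ℝ) :
    ‖M.map (algebraMap ℝ ℂ)‖ = ‖M‖ := by
  have hnn : ‖M.map (algebraMap ℝ ℂ)‖₊ = ‖M‖₊ := by
    rw [Matrix.linfty_opNNNorm_def, Matrix.linfty_opNNNorm_def]
    congr 1
    funext i
    apply Finset.sum_congr rfl
    intro j _
    simp [Matrix.map_apply]
  rw [← coe_nnnorm, ← coe_nnnorm, hnn]

lemma real_decay (A : Matrix (Fin n) (Fin n) ℝ) (hA : A.IsHurwitz) :
    ∃ C ε : ℝ, 0 < ε ∧ ∀ t : ℝ, 0 ≤ t → ‖exp (t • A)‖ ≤ C * Real.exp (-ε * t) := by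
  obtain ⟨C, ε, hε, h⟩ := mat_decay (A.map (algebraMap ℝ ℂ)) hA
  exact ⟨C, ε, hε, fun t ht => by
    rw [← norm_map_complex, exp_map_complex]; exact h t ht⟩

lemma hurwitz_transpose (A : Matrix (Fin n) (Fin n) ℝ) (hA : A.IsHurwitz) :
    Aᵀ.IsHurwitz := by
  intro z hz
  apply hA z
  rw [spectrum.mem_iff] at hz ⊢
  intro hu
  apply hz
  have hT : algebraMap ℂ _ z - Aᵀ.map (algebraMap ℝ ℂ)
      = (algebraMap ℂ (Matrix (Fin n) (Fin n) ℂ) z - A.map (algebraMap ℝ ℂ))ᵀ := by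
    rw [Matrix.transpose_sub, Matrix.transpose_map]
    congr 1
    rw [Algebra.algebraMap_eq_smul_one, Matrix.transpose_smul, Matrix.transpose_one]
  rw [hT, Matrix.isUnit_iff_isUnit_det, Matrix.det_transpose,
    ← Matrix.isUnit_iff_isUnit_det]
  exact hu

lemma phi_hasDerivAt (A S : Matrix (Fin n) (Fin n) ℝ) (t : ℝ) :
    HasDerivAt (fun u : ℝ => exp (u • A) * S * exp (u • Aᵀ))
      (A * (exp (t • A) * S * exp (t • Aᵀ))
        + (exp (t • A) * S * exp (t • Aᵀ)) * Aᵀ) t := by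
  have h1 : HasDerivAt (fun u : ℝ => exp (u • A) * S) (exp (t • A) * A * S) t :=
    (hasDerivAt_exp_smul_const A t).mul_const S
  have h2 := hasDerivAt_exp_smul_const Aᵀ t
  have h := h1.mul h2
  have cA : A * exp (t • A) = exp (t • A) * A :=
    ((Commute.refl A).smul_right t).exp_right |>.eq
  have cT : exp (t • Aᵀ) * Aᵀ = Aᵀ * exp (t • Aᵀ) :=
    (((Commute.refl Aᵀ).smul_right t).exp_right |>.eq).symm
  refine h.congr_deriv ?_
  simp only [← mul_assoc]
  rw [cA]
  rfl

lemma sandwich (A X : Matrix (Fin n) (Fin n) ℝ) (t : ℝ) :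
    A * (exp (t • A) * X * exp (t • Aᵀ))
      + (exp (t • A) * X * exp (t • Aᵀ)) * Aᵀ
    = exp (t • A) * (A * X + X * Aᵀ) * exp (t • Aᵀ) := by
  have cA : A * exp (t • A) = exp (t • A) * A :=
    ((Commute.refl A).smul_right t).exp_right |>.eq
  have cT : exp (t • Aᵀ) * Aᵀ = Aᵀ * exp (t • Aᵀ) :=
    (((Commute.refl Aᵀ).smul_right t).exp_right |>.eq).symm
  calc A * (exp (t • A) * X * exp (t • Aᵀ))
        + (exp (t • A) * X * exp (t • Aᵀ)) * Aᵀ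
      = (A * exp (t • A)) * X * exp (t • Aᵀ)
        + exp (t • A) * X * (exp (t • Aᵀ) * Aᵀ) := by
        simp only [mul_assoc]
  _ = (exp (t • A) * A) * X * exp (t • Aᵀ)
        + exp (t • A) * X * (Aᵀ * exp (t • Aᵀ)) := by rw [cA, cT]
  _ = exp (t • A) * (A * X + X * Aᵀ) * exp (t • Aᵀ) := by
        simp only [mul_add, add_mul, mul_assoc]

end LyapunovAux

/-- For a Hurwitz matrix `A` and arbitrary `S`, the algebraic Lyapunov equation
`A P + P Aᵀ + S = 0` has a unique solution, given by `∫₀^∞ exp(tA) S exp(tAᵀ) dt`. -/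
theorem lyapunov_unique_solution {n : ℕ} (A S : Matrix (Fin n) (Fin n) ℝ)
    (hA : A.IsHurwitz) :
    (∀ P₁ P₂ : Matrix (Fin n) (Fin n) ℝ,
        A * P₁ + P₁ * Aᵀ + S = 0 → A * P₂ + P₂ * Aᵀ + S = 0 → P₁ = P₂) ∧
      A * (∫ t in Set.Ioi (0 : ℝ), exp (t • A) * S * exp (t • Aᵀ)) +
        (∫ t in Set.Ioi (0 : ℝ), exp (t • A) * S * exp (t • Aᵀ)) * Aᵀ + S = 0 := by
  classical
  obtain ⟨C₁, ε₁, hε₁, h₁⟩ := LyapunovAux.real_decay A hA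
  obtain ⟨C₂, ε₂, hε₂, h₂⟩ := LyapunovAux.real_decay Aᵀ (LyapunovAux.hurwitz_transpose A hA)
  have hbound : ∀ (X : Matrix (Fin n) (Fin n) ℝ) (t : ℝ), 0 ≤ t →
      ‖exp (t • A) * X * exp (t • Aᵀ)‖
        ≤ (C₁ * ‖X‖ * C₂) * Real.exp (-(ε₁ + ε₂) * t) := by
    intro X t ht
    calc ‖exp (t • A) * X * exp (t • Aᵀ)‖
        ≤ ‖exp (t • A) * X‖ * ‖exp (t • Aᵀ)‖ := norm_mul_le _ _
    _ ≤ (‖exp (t • A)‖ * ‖X‖) * ‖exp (t • Aᵀ)‖ :=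
        mul_le_mul_of_nonneg_right (norm_mul_le _ _) (norm_nonneg _)
    _ ≤ ((C₁ * Real.exp (-ε₁ * t)) * ‖X‖) * (C₂ * Real.exp (-ε₂ * t)) := by
        apply mul_le_mul (mul_le_mul_of_nonneg_right (h₁ t ht) (norm_nonneg X)) (h₂ t ht)
          (norm_nonneg _)
        have hC₁ : 0 ≤ C₁ := by
          have h0 := h₁ 0 le_rfl
          simp only [mul_zero, Real.exp_zero, mul_one] at h0
          exact le_trans (norm_nonneg _) h0
        positivity
    _ = (C₁ * ‖X‖ * C₂) * Real.exp (-(ε₁ + ε₂) * t) := by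
        rw [show -(ε₁ + ε₂) * t = -ε₁ * t + -ε₂ * t by ring, Real.exp_add]
        ring
  have htends : ∀ X : Matrix (Fin n) (Fin n) ℝ,
      Filter.Tendsto (fun t : ℝ => exp (t • A) * X * exp (t • Aᵀ))
        Filter.atTop (nhds 0) := by
    intro X
    apply squeeze_zero_norm' ((Filter.eventually_ge_atTop (0:ℝ)).mono fun t ht =>
      hbound X t ht)
    have hexp : Filter.Tendsto (fun t : ℝ => Real.exp (-(ε₁ + ε₂) * t))
        Filter.atTop (nhds 0) := by
      have h := Real.tendsto_exp_neg_atTop_nhds_zero.comp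
        (Filter.Tendsto.const_mul_atTop (show (0:ℝ) < ε₁ + ε₂ by linarith) Filter.tendsto_id)
      have heq : (fun t : ℝ => Real.exp (-(ε₁ + ε₂) * t))
          = ((fun x : ℝ => Real.exp (-x)) ∘ fun x : ℝ => (ε₁ + ε₂) * x) := by
        funext t
        simp only [Function.comp, id]
        ring_nf
      rw [heq]
      exact h
    simpa using hexp.const_mul (C₁ * ‖X‖ * C₂)
  set Φ : ℝ → Matrix (Fin n) (Fin n) ℝ :=
    fun t => exp (t • A) * S * exp (t • Aᵀ) with hΦ
  constructor
  · intro P₁ P₂ e1 e2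
    have hD0 : A * (P₁ - P₂) + (P₁ - P₂) * Aᵀ = 0 := by
      have hexp : A * (P₁ - P₂) + (P₁ - P₂) * Aᵀ
          = (A * P₁ + P₁ * Aᵀ + S) - (A * P₂ + P₂ * Aᵀ + S) := by noncomm_ring
      rw [hexp, e1, e2, sub_zero]
    have hg : ∀ t : ℝ, HasDerivAt
        (fun u : ℝ => exp (u • A) * (P₁ - P₂) * exp (u • Aᵀ)) 0 t := by
      intro t
      have h := LyapunovAux.phi_hasDerivAt A (P₁ - P₂) t
      rwa [LyapunovAux.sandwich, hD0, mul_zero, zero_mul] at h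
    have hconst := is_const_of_deriv_eq_zero (𝕜 := ℝ)
      (f := fun u : ℝ => exp (u • A) * (P₁ - P₂) * exp (u • Aᵀ))
      (fun t => (hg t).differentiableAt) (fun t => (hg t).deriv)
    have hgeq : (fun u : ℝ => exp (u • A) * (P₁ - P₂) * exp (u • Aᵀ))
        = fun _ => P₁ - P₂ := by
      funext u
      calc exp (u • A) * (P₁ - P₂) * exp (u • Aᵀ)
          = exp ((0:ℝ) • A) * (P₁ - P₂) * exp ((0:ℝ) • Aᵀ) := hconst u 0
      _ = P₁ - P₂ := by simp
    have ht0 := htends (P₁ - P₂)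
    rw [hgeq] at ht0
    have hD : P₁ - P₂ = 0 := tendsto_nhds_unique tendsto_const_nhds ht0
    exact sub_eq_zero.mp hD
  · letI : TopologicalSpace (Matrix (Fin n) (Fin n) ℝ) :=
      PseudoMetricSpace.toUniformSpace.toTopologicalSpace
    have hΦc : Continuous Φ := by
      apply continuous_iff_continuousAt.mpr
      intro t
      exact (LyapunovAux.phi_hasDerivAt A S t).continuousAt
    have hΦint : IntegrableOn Φ (Set.Ioi 0) volume := by
      apply Integrable.mono'
        ((exp_neg_integrableOn_Ioi 0 (show 0 < ε₁ + ε₂ by linarith)).const_mul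
          (C₁ * ‖S‖ * C₂))
      · exact hΦc.aestronglyMeasurable.restrict
      · rw [ae_restrict_iff' measurableSet_Ioi]
        exact Filter.Eventually.of_forall fun t ht => hbound S t (le_of_lt ht)
    let L₁ : Matrix (Fin n) (Fin n) ℝ →L[ℝ] Matrix (Fin n) (Fin n) ℝ :=
      ContinuousLinearMap.mul ℝ _ A
    let L₂ : Matrix (Fin n) (Fin n) ℝ →L[ℝ] Matrix (Fin n) (Fin n) ℝ :=
      (ContinuousLinearMap.mul ℝ (Matrix (Fin n) (Fin n) ℝ)).flip Aᵀ
    have hL₁ : ∀ X, L₁ X = A * X := fun X => rfl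
    have hL₂ : ∀ X, L₂ X = X * Aᵀ := fun X => rfl
    have hΨ1 : IntegrableOn (fun t => A * Φ t) (Set.Ioi 0) volume := by
      have := L₁.integrable_comp hΦint
      simp only [hL₁] at this
      exact this
    have hΨ2 : IntegrableOn (fun t => Φ t * Aᵀ) (Set.Ioi 0) volume := by
      have := L₂.integrable_comp hΦint
      simp only [hL₂] at this
      exact this
    have hFTC := MeasureTheory.integral_Ioi_of_hasDerivAt_of_tendsto (f := Φ)
      (f' := fun t => A * Φ t + Φ t * Aᵀ) (a := 0) (m := 0)
      hΦc.continuousWithinAt (fun x _ => LyapunovAux.phi_hasDerivAt A S x)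
      (hΨ1.add hΨ2) (htends S)
    have hΦ0 : Φ 0 = S := by simp [hΦ]
    rw [hΦ0] at hFTC
    have hsplit : (∫ t in Set.Ioi (0:ℝ), (A * Φ t + Φ t * Aᵀ))
        = A * (∫ t in Set.Ioi (0:ℝ), Φ t) + (∫ t in Set.Ioi (0:ℝ), Φ t) * Aᵀ := by
      rw [integral_add hΨ1 hΨ2]
      congr 1
      · have := L₁.integral_comp_comm hΦint
        simp only [hL₁] at this
        rw [this]
      · have := L₂.integral_comp_comm hΦint
        simp only [hL₂] at this
        rw [this]
    rw [hsplit] at hFTC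
    rw [hFTC]
    simp
end

section
/- Let A : ℝ → ℝ^{n×n} and S : ℝ → ℝ^{n×n} be matrix-valued functions differentiable at 0, with A(0) Hurwitz. Then there is a neighborhood of 0 on which A(ε) is Hurwitz, so that the algebraic Lyapunov equation A(ε)·P + P·A(ε)ᵀ + S(ε) = 0 has a unique solution P(ε) there; moreover the map ε ↦ P(ε) is differentiable at 0, and its derivative P'(0) is the unique solution of the Lyapunov equation A(0)·P'(0) + P'(0)·A(0)ᵀ + (A'(0)·P(0) + P(0)·A'(0)ᵀ + S'(0)) = 0. -/
open Matrix

attribute [local instance] Matrix.linftyOpNormedAddCommGroup Matrix.linftyOpNormedRing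
  Matrix.linftyOpNormedAlgebra

open Polynomial

section helpers

variable {m : Type*} [Fintype m] [DecidableEq m]

private lemma spec_iff_root (M : Matrix m m ℂ) (z : ℂ) :
    z ∈ spectrum ℂ M ↔ M.charpoly.IsRoot z := by
  have key : (algebraMap ℂ (Matrix m m ℂ) z - M).det = M.charpoly.eval z := by
    have h1 : (M.charmatrix).map (Polynomial.evalRingHom z)
        = algebraMap ℂ (Matrix m m ℂ) z - M := by
      ext i j
      by_cases h : i = j <;>
        simp [Matrix.charmatrix_apply, h, Matrix.algebraMap_matrix_apply, Matrix.diagonal]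
    rw [Matrix.charpoly, ← h1]
    rw [show M.charmatrix.map ⇑(evalRingHom z) = (evalRingHom z).mapMatrix M.charmatrix from rfl,
      ← RingHom.map_det]
    simp
  rw [spectrum.mem_iff, Matrix.isUnit_iff_isUnit_det, isUnit_iff_ne_zero, not_not,
    Polynomial.IsRoot, key]

private lemma spec_transpose (M : Matrix m m ℂ) : spectrum ℂ Mᵀ = spectrum ℂ M := by
  ext z
  rw [spectrum.mem_iff, spectrum.mem_iff, not_iff_not]
  have : algebraMap ℂ (Matrix m m ℂ) z - Mᵀ = (algebraMap ℂ (Matrix m m ℂ) z - M)ᵀ := by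
    ext i j
    by_cases h : i = j <;> simp [Matrix.algebraMap_matrix_apply, h, eq_comm]
  rw [this, Matrix.isUnit_iff_isUnit_det, Matrix.det_transpose, ← Matrix.isUnit_iff_isUnit_det]

private lemma spec_neg (M : Matrix m m ℂ) (z : ℂ) :
    z ∈ spectrum ℂ (-M) ↔ -z ∈ spectrum ℂ M := by
  rw [spectrum.mem_iff, spectrum.mem_iff, not_iff_not]
  have : algebraMap ℂ (Matrix m m ℂ) z - -M = -(algebraMap ℂ (Matrix m m ℂ) (-z) - M) := by
    simp [sub_neg_eq_add]
    abel
  rw [this, IsUnit.neg_iff]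

end helpers

section helpers2

variable {m : Type*} [Fintype m] [DecidableEq m]

private lemma hurwitz_inj {B : Matrix m m ℝ} (hB : B.IsHurwitz)
    (P : Matrix m m ℝ) (hP : B * P + P * Bᵀ = 0) : P = 0 := by
  cases isEmpty_or_nonempty m with
  | inl h => exact Subsingleton.elim _ _
  | inr h =>
  set f := algebraMap ℝ ℂ with hf
  set Bc := B.map f with hBc
  set Pc := P.map f with hPc
  set Q := -Bcᵀ with hQ
  have hceq : Bc * Pc + Pc * Bcᵀ = 0 := by
    have := congrArg (fun X : Matrix m m ℝ => X.map f) hP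
    simpa [Matrix.map_mul, Matrix.map_add, Matrix.transpose_map] using this
  have hcomm : Bc * Pc = Pc * Q := by
    rw [hQ, mul_neg]
    exact eq_neg_of_add_eq_zero_left hceq
  have hpow : ∀ k : ℕ, Bc ^ k * Pc = Pc * Q ^ k := by
    intro k
    induction k with
    | zero => simp
    | succ k ih =>
      rw [pow_succ, pow_succ, mul_assoc, hcomm, ← mul_assoc, ih, mul_assoc]
  have hpoly : ∀ q : Polynomial ℂ, Polynomial.aeval Bc q * Pc = Pc * Polynomial.aeval Q q := by
    intro q
    induction q using Polynomial.induction_on' with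
    | add p q hp hq => simp [map_add, add_mul, mul_add, hp, hq]
    | monomial k c =>
      simp only [Polynomial.aeval_monomial]
      rw [mul_assoc, hpow k, ← mul_assoc, Algebra.commutes c Pc, mul_assoc]
  have h0 : Pc * Polynomial.aeval Q Bc.charpoly = 0 := by
    rw [← hpoly, Matrix.aeval_self_charpoly, zero_mul]
  have hdeg : 0 < Bc.charpoly.degree := by
    rw [Matrix.charpoly_degree_eq_dim]
    exact_mod_cast Fintype.card_pos
  have hunit : IsUnit (Polynomial.aeval Q Bc.charpoly) := by
    rw [← spectrum.zero_notMem_iff ℂ,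
      spectrum.map_polynomial_aeval_of_degree_pos Q Bc.charpoly hdeg]
    rintro ⟨μ, hμ, hμ0⟩
    have h1 : -μ ∈ spectrum ℂ Bc := by
      rw [← spec_transpose]
      exact (spec_neg _ μ).mp hμ
    have h2 : μ ∈ spectrum ℂ Bc := (spec_iff_root Bc μ).mpr hμ0
    have l1 := hB _ h1
    have l2 := hB _ h2
    simp only [Complex.neg_re] at l1
    linarith
  obtain ⟨u, hu⟩ := hunit
  rw [← hu, Units.mul_left_eq_zero] at h0
  ext i j
  have := congrFun (congrFun h0 i) j
  simpa [hPc, Matrix.map_apply, hf] using this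

private lemma hurwitz_isOpen [Nonempty m] : IsOpen {B : Matrix m m ℝ | B.IsHurwitz} := by
  rw [isOpen_iff_mem_nhds]
  intro A hA
  set φ : Matrix m m ℝ → Matrix m m ℂ := fun B => B.map (algebraMap ℝ ℂ) with hφdef
  have hφ : Continuous φ := continuous_id.matrix_map Complex.continuous_ofReal
  set C : ℝ := ‖φ A‖ + 1 with hC
  set K : Set ℂ := {z | 0 ≤ z.re} ∩ Metric.closedBall 0 C with hK
  have hKc : IsCompact K :=
    (isCompact_closedBall 0 C).inter_left (isClosed_le continuous_const Complex.continuous_re)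
  set U : Set (ℂ × Matrix m m ℂ) := {p | IsUnit (algebraMap ℂ (Matrix m m ℂ) p.1 - p.2)} with hU
  have hUopen : IsOpen U := by
    have hcont : Continuous fun p : ℂ × Matrix m m ℂ =>
        algebraMap ℂ (Matrix m m ℂ) p.1 - p.2 :=
      (((Algebra.linearMap ℂ (Matrix m m ℂ)).continuous_of_finiteDimensional).comp
        continuous_fst).sub continuous_snd
    exact Units.isOpen.preimage hcont
  have hsub : K ×ˢ ({φ A} : Set (Matrix m m ℂ)) ⊆ U := by
    rintro ⟨z, X⟩ hzX
    simp only [Set.mem_prod, Set.mem_inter_iff, Set.mem_setOf_eq,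
      Set.mem_singleton_iff] at hzX
    obtain ⟨⟨hz1, -⟩, rfl⟩ := hzX
    by_contra h
    have hzs : z ∈ spectrum ℂ (φ A) := spectrum.mem_iff.mpr h
    exact absurd (hA z hzs) (not_lt.mpr hz1)
  obtain ⟨u, v, hu, hv, hKu, hAv, huv⟩ :=
    generalized_tube_lemma hKc isCompact_singleton hUopen hsub
  have hopen : IsOpen (φ ⁻¹' v ∩ {B | ‖φ B‖ < C}) :=
    (hv.preimage hφ).inter (isOpen_lt (continuous_norm.comp hφ) continuous_const)
  have hmem : A ∈ φ ⁻¹' v ∩ {B | ‖φ B‖ < C} :=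
    ⟨hAv rfl, by rw [Set.mem_setOf_eq, hC]; exact lt_add_one _⟩
  refine Filter.mem_of_superset (hopen.mem_nhds hmem) ?_
  rintro B ⟨hBv, hBC⟩ z hz
  by_contra hre
  push_neg at hre
  have hzK : z ∈ K := by
    refine ⟨hre, Metric.mem_closedBall.mpr ?_⟩
    rw [Complex.dist_eq, sub_zero]
    exact le_of_lt (lt_of_le_of_lt (spectrum.norm_le_norm_of_mem hz) hBC)
  have hmemU := huv (Set.mk_mem_prod (hKu hzK) hBv)
  exact (spectrum.notMem_iff.mpr hmemU) hz

end helpers2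

/-- If `A, S : ℝ → ℝ^{n×n}` are differentiable at `0` with `A 0` Hurwitz, then near `0`
the matrix `A ε` is Hurwitz and the Lyapunov equation `A ε · P + P · (A ε)ᵀ + S ε = 0`
has a unique solution `P ε`; the map `ε ↦ P ε` is differentiable at `0` and its
derivative is the unique solution of
`A 0 · P' + P' · (A 0)ᵀ + (A' 0 · P 0 + P 0 · (A' 0)ᵀ + S' 0) = 0`. -/
theorem lyapunov_solution_differentiable {n : ℕ}
    (A S : ℝ → Matrix (Fin n) (Fin n) ℝ)
    (hA : DifferentiableAt ℝ A 0) (hS : DifferentiableAt ℝ S 0)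
    (hA0 : (A 0).IsHurwitz) :
    ∃ P : ℝ → Matrix (Fin n) (Fin n) ℝ,
      (∀ᶠ ε in nhds (0 : ℝ),
          (A ε).IsHurwitz ∧
          A ε * P ε + P ε * (A ε)ᵀ + S ε = 0 ∧
          ∀ P' : Matrix (Fin n) (Fin n) ℝ,
            A ε * P' + P' * (A ε)ᵀ + S ε = 0 → P' = P ε) ∧
      DifferentiableAt ℝ P 0 ∧
      A 0 * deriv P 0 + deriv P 0 * (A 0)ᵀ +
        (deriv A 0 * P 0 + P 0 * (deriv A 0)ᵀ + deriv S 0) = 0 ∧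
      ∀ P' : Matrix (Fin n) (Fin n) ℝ,
        A 0 * P' + P' * (A 0)ᵀ +
          (deriv A 0 * P 0 + P 0 * (deriv A 0)ᵀ + deriv S 0) = 0 → P' = deriv P 0 := by
  rcases Nat.eq_zero_or_pos n with hn | hn
  · subst hn
    haveI : Subsingleton (Matrix (Fin 0) (Fin 0) ℝ) :=
      inferInstanceAs (Subsingleton (Fin 0 → Fin 0 → ℝ))
    have hur : ∀ B : Matrix (Fin 0) (Fin 0) ℝ, B.IsHurwitz := by
      intro B z hz
      exact absurd (isUnit_of_subsingleton _) (spectrum.mem_iff.mp hz)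
    exact ⟨fun _ => 0, Filter.Eventually.of_forall fun ε =>
        ⟨hur _, Subsingleton.elim _ _, fun P' _ => Subsingleton.elim _ _⟩,
      differentiableAt_const _, Subsingleton.elim _ _,
      fun P' _ => Subsingleton.elim _ _⟩
  haveI : Nonempty (Fin n) := Fin.pos_iff_nonempty.mp hn
  -- the Lyapunov operator as a continuous linear map
  let lyap : Matrix (Fin n) (Fin n) ℝ →
      (Matrix (Fin n) (Fin n) ℝ →ₗ[ℝ] Matrix (Fin n) (Fin n) ℝ) := fun X =>
    { toFun := fun P => X * P + P * Xᵀ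
      map_add' := fun P Q => by simp only [mul_add, add_mul]; abel
      map_smul' := fun c P => by
        simp only [RingHom.id_apply, smul_add, Matrix.mul_smul, Matrix.smul_mul] }
  let lyapL : Matrix (Fin n) (Fin n) ℝ →
      (Matrix (Fin n) (Fin n) ℝ →L[ℝ] Matrix (Fin n) (Fin n) ℝ) := fun X =>
    LinearMap.toContinuousLinearMap (lyap X)
  have lyapL_apply : ∀ X P : Matrix (Fin n) (Fin n) ℝ, lyapL X P = X * P + P * Xᵀ :=
    fun X P => rfl
  have hUnit : ∀ {B : Matrix (Fin n) (Fin n) ℝ}, B.IsHurwitz → IsUnit (lyapL B) := by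
    intro B hB
    have hinj : Function.Injective (lyap B) := by
      intro P Q h
      have h2 : B * (P - Q) + (P - Q) * Bᵀ = 0 := by
        have h3 : B * P + P * Bᵀ = B * Q + Q * Bᵀ := h
        rw [mul_sub, sub_mul]
        rw [show B * P - B * Q + (P * Bᵀ - Q * Bᵀ)
            = (B * P + P * Bᵀ) - (B * Q + Q * Bᵀ) by abel, h3, sub_self]
      exact sub_eq_zero.mp (hurwitz_inj hB _ h2)
    have hbij : Function.Bijective (lyap B) :=
      ⟨hinj, LinearMap.injective_iff_surjective.mp hinj⟩
    let e := LinearEquiv.ofBijective (lyap B) hbij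
    let E := e.toContinuousLinearEquiv
    refine ⟨⟨(E : _ →L[ℝ] _), (E.symm : _ →L[ℝ] _), ?_, ?_⟩, ?_⟩
    · ext x
      simp [ContinuousLinearMap.mul_apply]
    · ext x
      simp [ContinuousLinearMap.mul_apply]
    · refine ContinuousLinearMap.ext fun Pm => ?_
      show E Pm = lyapL B Pm
      simp [E, e, lyapL]
  -- definition of the solution
  set P : ℝ → Matrix (Fin n) (Fin n) ℝ :=
    fun ε => -(Ring.inverse (lyapL (A ε)) (S ε)) with hPdef
  -- differentiability
  have hTdiff : DifferentiableAt ℝ (fun ε => lyapL (A ε)) 0 := by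
    let bigT : Matrix (Fin n) (Fin n) ℝ →ₗ[ℝ]
        (Matrix (Fin n) (Fin n) ℝ →L[ℝ] Matrix (Fin n) (Fin n) ℝ) :=
      { toFun := lyapL
        map_add' := fun X Y => by
          refine ContinuousLinearMap.ext fun Pm => ?_
          simp only [lyapL_apply, ContinuousLinearMap.add_apply, Matrix.transpose_add,
            add_mul, mul_add]
          abel
        map_smul' := fun c X => by
          refine ContinuousLinearMap.ext fun Pm => ?_
          simp only [lyapL_apply, RingHom.id_apply, ContinuousLinearMap.coe_smul',
            Pi.smul_apply, Matrix.transpose_smul, Matrix.smul_mul, Matrix.mul_smul, smul_add] }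
    have : (fun ε => lyapL (A ε))
        = fun ε => (LinearMap.toContinuousLinearMap bigT) (A ε) := rfl
    rw [this]
    have hg : DifferentiableAt ℝ (LinearMap.toContinuousLinearMap bigT) (A 0) := by
      apply ContinuousLinearMap.differentiableAt
    exact DifferentiableAt.comp (F := Matrix (Fin n) (Fin n) ℝ)
      (G := @ContinuousLinearMap ℝ ℝ _ _ (RingHom.id ℝ) (Matrix (Fin n) (Fin n) ℝ)
        PseudoMetricSpace.toUniformSpace.toTopologicalSpace _ (Matrix (Fin n) (Fin n) ℝ)
        PseudoMetricSpace.toUniformSpace.toTopologicalSpace _ _ _) 0 hg hA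
  have hPdiff : DifferentiableAt ℝ P 0 :=
    ((hTdiff.inverse (hUnit hA0)).clm_apply hS).neg
  -- eventually Hurwitz
  have hev : ∀ᶠ ε in nhds (0 : ℝ), (A ε).IsHurwitz :=
    hA.continuousAt.preimage_mem_nhds (hurwitz_isOpen.mem_nhds hA0)
  -- the main eventual statement
  have hmain : ∀ᶠ ε in nhds (0 : ℝ),
      (A ε).IsHurwitz ∧
      A ε * P ε + P ε * (A ε)ᵀ + S ε = 0 ∧
      ∀ P' : Matrix (Fin n) (Fin n) ℝ,
        A ε * P' + P' * (A ε)ᵀ + S ε = 0 → P' = P ε := by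
    filter_upwards [hev] with ε hH
    have hu := hUnit hH
    have heq : lyapL (A ε) (P ε) = -(S ε) := by
      have h1 : lyapL (A ε) (P ε)
          = -((lyapL (A ε) * Ring.inverse (lyapL (A ε))) (S ε)) := by
        simp [hPdef, ContinuousLinearMap.mul_apply]
      rw [Ring.mul_inverse_cancel _ hu] at h1
      simpa using h1
    have hsol : A ε * P ε + P ε * (A ε)ᵀ + S ε = 0 := by
      rw [show A ε * P ε + P ε * (A ε)ᵀ = lyapL (A ε) (P ε) from (lyapL_apply _ _).symm,
        heq]
      simp
    refine ⟨hH, hsol, ?_⟩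
    intro P' hP'
    have h4 : A ε * P' + P' * (A ε)ᵀ = A ε * P ε + P ε * (A ε)ᵀ :=
      add_right_cancel (hP'.trans hsol.symm)
    have h3 : A ε * (P' - P ε) + (P' - P ε) * (A ε)ᵀ = 0 := by
      rw [mul_sub, sub_mul,
        show A ε * P' - A ε * P ε + (P' * (A ε)ᵀ - P ε * (A ε)ᵀ)
          = (A ε * P' + P' * (A ε)ᵀ) - (A ε * P ε + P ε * (A ε)ᵀ) by abel, h4, sub_self]
    exact sub_eq_zero.mp (hurwitz_inj hH _ h3)
  -- derivative computation
  have hAT : HasDerivAt (fun ε => (A ε)ᵀ) ((deriv A 0)ᵀ) 0 := by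
    let trL : Matrix (Fin n) (Fin n) ℝ →ₗ[ℝ] Matrix (Fin n) (Fin n) ℝ :=
      { toFun := fun X => Xᵀ
        map_add' := fun X Y => Matrix.transpose_add X Y
        map_smul' := fun c X => Matrix.transpose_smul c X }
    have h := (LinearMap.toContinuousLinearMap trL).hasFDerivAt.comp_hasDerivAt 0
        hA.hasDerivAt
    exact h
  have hF : HasDerivAt (fun ε => A ε * P ε + P ε * (A ε)ᵀ + S ε)
      ((deriv A 0 * P 0 + A 0 * deriv P 0) + (deriv P 0 * (A 0)ᵀ + P 0 * (deriv A 0)ᵀ)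
        + deriv S 0) 0 :=
    ((hA.hasDerivAt.mul hPdiff.hasDerivAt).add (hPdiff.hasDerivAt.mul hAT)).add
      hS.hasDerivAt
  have hFzero : HasDerivAt (fun ε => A ε * P ε + P ε * (A ε)ᵀ + S ε)
      (0 : Matrix (Fin n) (Fin n) ℝ) 0 :=
    (hasDerivAt_const (0 : ℝ) (0 : Matrix (Fin n) (Fin n) ℝ)).congr_of_eventuallyEq
      (hmain.mono fun ε h => h.2.1)
  have hD : (deriv A 0 * P 0 + A 0 * deriv P 0) + (deriv P 0 * (A 0)ᵀ + P 0 * (deriv A 0)ᵀ)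
      + deriv S 0 = 0 := hF.unique hFzero
  have hDeq : A 0 * deriv P 0 + deriv P 0 * (A 0)ᵀ +
      (deriv A 0 * P 0 + P 0 * (deriv A 0)ᵀ + deriv S 0) = 0 := by
    rw [show A 0 * deriv P 0 + deriv P 0 * (A 0)ᵀ +
        (deriv A 0 * P 0 + P 0 * (deriv A 0)ᵀ + deriv S 0)
      = (deriv A 0 * P 0 + A 0 * deriv P 0) + (deriv P 0 * (A 0)ᵀ + P 0 * (deriv A 0)ᵀ)
        + deriv S 0 by abel]
    exact hD
  refine ⟨P, hmain, hPdiff, hDeq, ?_⟩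
  intro P' hP'
  have h4 : A 0 * P' + P' * (A 0)ᵀ = A 0 * deriv P 0 + deriv P 0 * (A 0)ᵀ :=
    add_right_cancel (hP'.trans hDeq.symm)
  have h3 : A 0 * (P' - deriv P 0) + (P' - deriv P 0) * (A 0)ᵀ = 0 := by
    rw [mul_sub, sub_mul,
      show A 0 * P' - A 0 * deriv P 0 + (P' * (A 0)ᵀ - deriv P 0 * (A 0)ᵀ)
        = (A 0 * P' + P' * (A 0)ᵀ) - (A 0 * deriv P 0 + deriv P 0 * (A 0)ᵀ) by abel, h4,
      sub_self]
  exact sub_eq_zero.mp (hurwitz_inj hA0 _ h3)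
end

section
/- In the CQF matrix setting, for every real symmetric ν×ν matrix δr, the directional derivative d/dε 𝒵(r + ε·δr, N₁)|_{ε=0} exists and equals −4·trace(S(ϑ·E₂₂)·δr), where S(M) := (M + Mᵀ)/2. In particular, this derivative vanishes for all symmetric δr if and only if the matrix ϑ·E₂₂ is antisymmetric. -/
open Matrix MeasureTheory NormedSpace Kronecker

attribute [local instance] Matrix.linftyOpNormedAddCommGroup Matrix.linftyOpNormedRing
  Matrix.linftyOpNormedAlgebra Matrix.linftyOpNormedSpace

namespace CQF

/-- The matrix `J = [[0,1],[-1,0]] ⊗ I_k` on the even-dimensional space indexed by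
`Fin 2 × Fin k`. -/
noncomputable def Jmat (k : ℕ) : Matrix (Fin 2 × Fin k) (Fin 2 × Fin k) ℝ :=
  (Matrix.of ![![0, 1], ![-1, 0]] : Matrix (Fin 2) (Fin 2) ℝ) ⊗ₖ
    (1 : Matrix (Fin k) (Fin k) ℝ)

variable {n ν q m' μ' p : ℕ}

/-- The plant drift matrix `A = 2Θ(R + NᵀJN)`. -/
noncomputable def Amat (Θ R : Matrix (Fin n) (Fin n) ℝ)
    (N : Matrix (Fin 2 × Fin m') (Fin n) ℝ) : Matrix (Fin n) (Fin n) ℝ :=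
  (2 : ℝ) • (Θ * (R + Nᵀ * Jmat m' * N))

/-- The plant dispersion matrix `B = 2ΘNᵀ`. -/
noncomputable def Bmat (Θ : Matrix (Fin n) (Fin n) ℝ)
    (N : Matrix (Fin 2 × Fin m') (Fin n) ℝ) : Matrix (Fin n) (Fin 2 × Fin m') ℝ :=
  (2 : ℝ) • (Θ * Nᵀ)

/-- The plant output matrix `C = 2JN`. -/
noncomputable def Cmat (N : Matrix (Fin 2 × Fin m') (Fin n) ℝ) :
    Matrix (Fin 2 × Fin m') (Fin n) ℝ :=
  (2 : ℝ) • (Jmat m' * N)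

/-- The observer drift matrix `a = 2ϑ(r + N₁ᵀΠJΠᵀN₁ + N₂ᵀJ_μN₂)`. -/
noncomputable def amat (ϑ : Matrix (Fin ν) (Fin ν) ℝ)
    (Pi : Matrix (Fin p) (Fin 2 × Fin m') ℝ) (N₂ : Matrix (Fin 2 × Fin μ') (Fin ν) ℝ)
    (r : Matrix (Fin ν) (Fin ν) ℝ) (N₁ : Matrix (Fin p) (Fin ν) ℝ) :
    Matrix (Fin ν) (Fin ν) ℝ :=
  (2 : ℝ) • (ϑ * (r + N₁ᵀ * Pi * Jmat m' * Piᵀ * N₁ + N₂ᵀ * Jmat μ' * N₂))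

/-- The observer gain matrix `b₁ = 2ϑN₁ᵀΠ`. -/
noncomputable def b1 (ϑ : Matrix (Fin ν) (Fin ν) ℝ)
    (Pi : Matrix (Fin p) (Fin 2 × Fin m') ℝ) (N₁ : Matrix (Fin p) (Fin ν) ℝ) :
    Matrix (Fin ν) (Fin 2 × Fin m') ℝ :=
  (2 : ℝ) • (ϑ * N₁ᵀ * Pi)

/-- The observer gain matrix `b₂ = 2ϑN₂ᵀ`. -/
noncomputable def b2 (ϑ : Matrix (Fin ν) (Fin ν) ℝ)
    (N₂ : Matrix (Fin 2 × Fin μ') (Fin ν) ℝ) : Matrix (Fin ν) (Fin 2 × Fin μ') ℝ :=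
  (2 : ℝ) • (ϑ * N₂ᵀ)

/-- The plant-observer drift matrix `𝒜 = [[A, 0], [b₁C, a]]`. -/
noncomputable def calA (Θ R : Matrix (Fin n) (Fin n) ℝ)
    (N : Matrix (Fin 2 × Fin m') (Fin n) ℝ) (ϑ : Matrix (Fin ν) (Fin ν) ℝ)
    (Pi : Matrix (Fin p) (Fin 2 × Fin m') ℝ) (N₂ : Matrix (Fin 2 × Fin μ') (Fin ν) ℝ)
    (r : Matrix (Fin ν) (Fin ν) ℝ) (N₁ : Matrix (Fin p) (Fin ν) ℝ) :
    Matrix (Fin n ⊕ Fin ν) (Fin n ⊕ Fin ν) ℝ :=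
  Matrix.fromBlocks (Amat Θ R N) 0 (b1 ϑ Pi N₁ * Cmat N) (amat ϑ Pi N₂ r N₁)

/-- The plant-observer dispersion matrix `ℬ = [[B, 0], [b₁, b₂]]`. -/
noncomputable def calB (Θ : Matrix (Fin n) (Fin n) ℝ)
    (N : Matrix (Fin 2 × Fin m') (Fin n) ℝ) (ϑ : Matrix (Fin ν) (Fin ν) ℝ)
    (Pi : Matrix (Fin p) (Fin 2 × Fin m') ℝ) (N₂ : Matrix (Fin 2 × Fin μ') (Fin ν) ℝ)
    (N₁ : Matrix (Fin p) (Fin ν) ℝ) :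
    Matrix (Fin n ⊕ Fin ν) ((Fin 2 × Fin m') ⊕ (Fin 2 × Fin μ')) ℝ :=
  Matrix.fromBlocks (Bmat Θ N) 0 (b1 ϑ Pi N₁) (b2 ϑ N₂)

/-- The error matrix `𝒞 = [F, −G]`. -/
noncomputable def calC (F : Matrix (Fin q) (Fin n) ℝ) (G : Matrix (Fin q) (Fin ν) ℝ) :
    Matrix (Fin q) (Fin n ⊕ Fin ν) ℝ :=
  Matrix.fromCols F (-G)

/-- The Gramian `∫₀^∞ exp(t𝒜) S exp(t𝒜ᵀ) dt`, the unique solution of the algebraic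
Lyapunov equation `𝒜P + P𝒜ᵀ + S = 0` whenever `𝒜` is Hurwitz. -/
noncomputable def gram {k : Type*} [Fintype k] [DecidableEq k] (A S : Matrix k k ℝ) :
    Matrix k k ℝ :=
  ∫ t in Set.Ioi (0 : ℝ), exp (t • A) * S * exp (t • Aᵀ)

/-- The CQF cost `𝒵(r, N₁) = trace(𝒞ᵀ𝒞 Pm)`, with `Pm` the controllability Gramian of
`(𝒜, ℬ)`. -/
noncomputable def Zcost (Θ R : Matrix (Fin n) (Fin n) ℝ)
    (N : Matrix (Fin 2 × Fin m') (Fin n) ℝ) (ϑ : Matrix (Fin ν) (Fin ν) ℝ)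
    (Pi : Matrix (Fin p) (Fin 2 × Fin m') ℝ) (N₂ : Matrix (Fin 2 × Fin μ') (Fin ν) ℝ)
    (F : Matrix (Fin q) (Fin n) ℝ) (G : Matrix (Fin q) (Fin ν) ℝ)
    (r : Matrix (Fin ν) (Fin ν) ℝ) (N₁ : Matrix (Fin p) (Fin ν) ℝ) : ℝ :=
  ((calC F G)ᵀ * calC F G *
    gram (calA Θ R N ϑ Pi N₂ r N₁)
      (calB Θ N ϑ Pi N₂ N₁ * (calB Θ N ϑ Pi N₂ N₁)ᵀ)).trace

/-- The symmetrizer `S(M) = (M + Mᵀ)/2`. -/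
noncomputable def Smat {k : Type*} [Fintype k] (M : Matrix k k ℝ) : Matrix k k ℝ :=
  (1 / 2 : ℝ) • (M + Mᵀ)

end CQF

open CQF

open scoped NNReal ENNReal

noncomputable instance normTop {m n α : Type*} [Fintype m] [Fintype n] [NormedAddCommGroup α] :
    TopologicalSpace (Matrix m n α) :=
  (Matrix.linftyOpNormedAddCommGroup).toUniformSpace.toTopologicalSpace

lemma exp_bridge {k : Type*} [Fintype k] [DecidableEq k] (X : Matrix k k ℝ) :
    @NormedSpace.exp (Matrix k k ℝ) _ instTopologicalSpaceMatrix _ X = NormedSpace.exp X := by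
  congr 1

namespace CQFAux

variable {k : Type*} [Fintype k] [DecidableEq k]

lemma norm_map_ofReal (M : Matrix k k ℝ) : ‖M.map (algebraMap ℝ ℂ)‖ = ‖M‖ := by
  rw [← coe_nnnorm, ← coe_nnnorm]
  congr 1
  rw [Matrix.linfty_opNNNorm_def, Matrix.linfty_opNNNorm_def]
  refine congr_arg _ (funext fun i => ?_)
  refine Finset.sum_congr rfl fun j _ => ?_
  simp [Matrix.map_apply]

lemma entry_nnnorm_le (M : Matrix k k ℝ) (i j : k) : ‖M i j‖₊ ≤ ‖M‖₊ := by
  rw [Matrix.linfty_opNNNorm_def]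
  calc ‖M i j‖₊ ≤ ∑ j', ‖M i j'‖₊ :=
        Finset.single_le_sum (f := fun j' => ‖M i j'‖₊) (fun _ _ => by positivity) (Finset.mem_univ j)
  _ ≤ _ := Finset.le_sup (f := fun i => ∑ j', ‖M i j'‖₊) (Finset.mem_univ i)

lemma entry_le_norm (M : Matrix k k ℝ) (i j : k) : ‖M i j‖ ≤ ‖M‖ := entry_nnnorm_le M i j

lemma norm_transpose_le (M : Matrix k k ℝ) : ‖Mᵀ‖ ≤ (Fintype.card k) * ‖M‖ := by
  have h : ‖Mᵀ‖₊ ≤ (Fintype.card k) * ‖M‖₊ := by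
    rw [Matrix.linfty_opNNNorm_def]
    refine Finset.sup_le fun i _ => ?_
    calc ∑ j, ‖Mᵀ i j‖₊ ≤ ∑ _j : k, ‖M‖₊ :=
          Finset.sum_le_sum fun j _ => entry_nnnorm_le M j i
      _ = (Fintype.card k) * ‖M‖₊ := by
          rw [Finset.sum_const, Finset.card_univ, nsmul_eq_mul]
  calc ‖Mᵀ‖ = ((‖Mᵀ‖₊ : ℝ≥0) : ℝ) := (coe_nnnorm _).symm
    _ ≤ (((Fintype.card k) * ‖M‖₊ : ℝ≥0) : ℝ) := by exact_mod_cast h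
    _ = (Fintype.card k) * ‖M‖ := by push_cast; ring

lemma abs_trace_le (M : Matrix k k ℝ) : |M.trace| ≤ (Fintype.card k) * ‖M‖ := by
  calc |M.trace| ≤ ∑ i, |M i i| := by
        simpa [Matrix.trace, Matrix.diag] using
          Finset.abs_sum_le_sum_abs (fun i => M i i) Finset.univ
    _ ≤ ∑ _i : k, ‖M‖ := Finset.sum_le_sum fun i _ => entry_le_norm M i i
    _ = (Fintype.card k) * ‖M‖ := by
        rw [Finset.sum_const, Finset.card_univ, nsmul_eq_mul]

section Spectral

variable {k : Type*} [Fintype k] [DecidableEq k]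

lemma eigvec_of_mem_spectrum {M : Matrix k k ℂ} {z : ℂ} (hz : z ∈ spectrum ℂ M) :
    ∃ v : k → ℂ, v ≠ 0 ∧ M *ᵥ v = z • v := by
  rw [spectrum.mem_iff, Matrix.isUnit_iff_isUnit_det, isUnit_iff_ne_zero, not_not] at hz
  rw [show (algebraMap ℂ (Matrix k k ℂ)) z = z • (1 : Matrix k k ℂ) from
    Algebra.algebraMap_eq_smul_one z] at hz
  obtain ⟨v, hv0, hv⟩ := Matrix.exists_mulVec_eq_zero_iff.mpr hz
  refine ⟨v, hv0, ?_⟩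
  rw [Matrix.sub_mulVec, sub_eq_zero, Matrix.smul_mulVec, Matrix.one_mulVec] at hv
  exact hv.symm

lemma pow_mulVec_eig {M : Matrix k k ℂ} {z : ℂ} {v : k → ℂ} (hv : M *ᵥ v = z • v) (n : ℕ) :
    (M ^ n) *ᵥ v = z ^ n • v := by
  induction n with
  | zero => simp [Matrix.one_mulVec]
  | succ n ih =>
      rw [pow_succ, ← Matrix.mulVec_mulVec, hv, Matrix.mulVec_smul, ih, smul_smul, pow_succ]
      ring_nf

lemma aeval_mulVec_eig {M : Matrix k k ℂ} {z : ℂ} {v : k → ℂ} (hv : M *ᵥ v = z • v)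
    (p : Polynomial ℂ) : (Polynomial.aeval M p) *ᵥ v = p.eval z • v := by
  induction p using Polynomial.induction_on' with
  | add p q hp hq => rw [map_add, Matrix.add_mulVec, hp, hq, Polynomial.eval_add, add_smul]
  | monomial n c =>
      rw [Polynomial.aeval_monomial, Polynomial.eval_monomial,
        show (algebraMap ℂ (Matrix k k ℂ)) c = c • (1 : Matrix k k ℂ) from
          Algebra.algebraMap_eq_smul_one c, smul_mul_assoc, one_mul,
        Matrix.smul_mulVec, pow_mulVec_eig hv, smul_smul]

lemma exp_mulVec_eig {M : Matrix k k ℂ} {z : ℂ} {v : k → ℂ} (hv : M *ᵥ v = z • v) :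
    (NormedSpace.exp M) *ᵥ v = Complex.exp z • v := by
  classical
  let L : Matrix k k ℂ →ₗ[ℂ] (k → ℂ) :=
    { toFun := fun X => X *ᵥ v
      map_add' := fun X Y => Matrix.add_mulVec X Y v
      map_smul' := fun c X => Matrix.smul_mulVec c X v }
  have hL : Continuous L := L.continuous_of_finiteDimensional
  have hsum : HasSum (fun n : ℕ => (n.factorial⁻¹ : ℂ) • M ^ n) (NormedSpace.exp M) :=
    NormedSpace.exp_series_hasSum_exp' M
  have h2 : HasSum (fun n : ℕ => L ((n.factorial⁻¹ : ℂ) • M ^ n)) (L (NormedSpace.exp M)) :=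
    hsum.mapL (L.toContinuousLinearMap)
  have h3 : ∀ n : ℕ, L ((n.factorial⁻¹ : ℂ) • M ^ n) = ((n.factorial⁻¹ : ℂ) * z ^ n) • v := by
    intro n
    show ((n.factorial⁻¹ : ℂ) • M ^ n) *ᵥ v = _
    rw [Matrix.smul_mulVec, pow_mulVec_eig hv, smul_smul]
  rw [funext h3] at h2
  have h4 : HasSum (fun n : ℕ => (n.factorial⁻¹ : ℂ) * z ^ n) (NormedSpace.exp z) := by
    simpa [smul_eq_mul] using NormedSpace.exp_series_hasSum_exp' (𝕂 := ℂ) (𝔸 := ℂ) z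
  have h5 : HasSum (fun n : ℕ => ((n.factorial⁻¹ : ℂ) * z ^ n) • v) (NormedSpace.exp z • v) :=
    h4.smul_const v
  have := h2.unique h5
  rw [show L (NormedSpace.exp M) = (NormedSpace.exp M) *ᵥ v from rfl] at this
  rw [this, Complex.exp_eq_exp_ℂ]

lemma exp_mem_adjoin (M : Matrix k k ℂ) :
    NormedSpace.exp M ∈ Algebra.adjoin ℂ ({M} : Set (Matrix k k ℂ)) := by
  have hclosed : IsClosed ((Subalgebra.toSubmodule (Algebra.adjoin ℂ ({M} : Set (Matrix k k ℂ)))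
      : Submodule ℂ (Matrix k k ℂ)) : Set (Matrix k k ℂ)) :=
    Submodule.closed_of_finiteDimensional _
  have hsum : HasSum (fun n : ℕ => (n.factorial⁻¹ : ℂ) • M ^ n) (NormedSpace.exp M) :=
    NormedSpace.exp_series_hasSum_exp' M
  have htend := hsum.tendsto_sum_nat
  refine hclosed.mem_of_tendsto htend (Filter.Eventually.of_forall fun N => ?_)
  refine Submodule.sum_mem _ fun i _ => Submodule.smul_mem _ _ ?_
  exact Subalgebra.pow_mem _ (Algebra.self_mem_adjoin_singleton ℂ M) i

lemma spectrum_exp_subset [Nonempty k] (M : Matrix k k ℂ) :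
    spectrum ℂ (NormedSpace.exp M) ⊆ Complex.exp '' spectrum ℂ M := by
  obtain ⟨p, hp⟩ := (Algebra.adjoin_singleton_eq_range_aeval ℂ M ▸ exp_mem_adjoin M :
    NormedSpace.exp M ∈ (Polynomial.aeval M).range)
  have hp' : (Polynomial.aeval M) p = NormedSpace.exp M := hp
  have hspec := spectrum.map_polynomial_aeval_of_nonempty M p (spectrum.nonempty M)
  rw [hp'] at hspec
  rw [hspec]
  rintro - ⟨z, hz, rfl⟩
  obtain ⟨v, hv0, hv⟩ := eigvec_of_mem_spectrum hz
  have h1 : (Polynomial.aeval M p) *ᵥ v = p.eval z • v := aeval_mulVec_eig hv p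
  rw [hp', exp_mulVec_eig hv] at h1
  have : (Complex.exp z - p.eval z) • v = 0 := by rw [sub_smul, h1, sub_self]
  rcases smul_eq_zero.mp this with h | h
  · exact ⟨z, hz, (sub_eq_zero.mp h)⟩
  · exact absurd h hv0

end Spectral

section Decay

variable {k : Type*} [Fintype k] [DecidableEq k]

lemma exp_map_ofReal (B : Matrix k k ℝ) :
    (NormedSpace.exp B).map (algebraMap ℝ ℂ) = NormedSpace.exp (B.map (algebraMap ℝ ℂ)) := by
  have hcont : Continuous ((Algebra.ofId ℝ ℂ).mapMatrix : Matrix k k ℝ →ₐ[ℝ] Matrix k k ℂ) :=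
    ((Algebra.ofId ℝ ℂ).mapMatrix : Matrix k k ℝ →ₐ[ℝ] Matrix k k ℂ).toLinearMap.continuous_of_finiteDimensional
  have h := map_exp ((Algebra.ofId ℝ ℂ).mapMatrix : Matrix k k ℝ →ₐ[ℝ] Matrix k k ℂ) hcont B
  have h2 : (NormedSpace.exp (B.map (algebraMap ℝ ℂ)) : Matrix k k ℂ)
      = NormedSpace.exp (B.map (algebraMap ℝ ℂ)) := rfl
  simp only [AlgHom.mapMatrix_apply] at h
  rw [show ⇑(Algebra.ofId ℝ ℂ) = ⇑(algebraMap ℝ ℂ) from rfl] at h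
  rw [← h2, ← h]

lemma map_smul_ofReal (t : ℝ) (B : Matrix k k ℝ) :
    (t • B).map (algebraMap ℝ ℂ) = t • (B.map (algebraMap ℝ ℂ)) := by
  ext i j
  simp [Matrix.map_apply, Complex.real_smul]

lemma norm_exp_real_eq (B : Matrix k k ℝ) (t : ℝ) :
    ‖NormedSpace.exp (t • B)‖ = ‖NormedSpace.exp (t • B.map (algebraMap ℝ ℂ))‖ := by
  rw [← norm_map_ofReal (NormedSpace.exp (t • B)), exp_map_ofReal, map_smul_ofReal]

theorem hurwitz_decay (A : Matrix k k ℝ) (hA : A.IsHurwitz) :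
    ∃ C : ℝ, 1 ≤ C ∧ ∃ δ : ℝ, 0 < δ ∧ ∀ t : ℝ, 0 ≤ t →
      ‖NormedSpace.exp (t • A)‖ ≤ C * Real.exp (-δ * t) := by
  rcases isEmpty_or_nonempty k with hk | hk
  · refine ⟨1, le_refl 1, 1, one_pos, fun t ht => ?_⟩
    have h0 : NormedSpace.exp (t • A) = 0 := Subsingleton.elim _ _
    rw [h0, norm_zero, one_mul]
    positivity
  set Ac := A.map (algebraMap ℝ ℂ) with hAcdef
  obtain ⟨z₀, hz₀mem, hz₀max⟩ := (spectrum.isCompact (𝕜 := ℂ) Ac).exists_isMaxOn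
    (spectrum.nonempty Ac) (Complex.continuous_re.continuousOn)
  set δ' : ℝ := -z₀.re / 2 with hδ'def
  have hz₀neg : z₀.re < 0 := hA z₀ hz₀mem
  have hδ'pos : 0 < δ' := by rw [hδ'def]; linarith
  -- spectral radius bound
  have hρ : spectralRadius ℂ (NormedSpace.exp Ac) ≤ ENNReal.ofReal (Real.exp (-2 * δ')) := by
    rw [spectralRadius]
    refine iSup₂_le fun μ hμ => ?_
    obtain ⟨z, hz, rfl⟩ := spectrum_exp_subset Ac hμ
    rw [← ENNReal.ofReal_coe_nnreal, coe_nnnorm]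
    refine ENNReal.ofReal_le_ofReal ?_
    rw [Complex.norm_exp]
    refine Real.exp_le_exp.mpr ?_
    have := hz₀max hz
    simp only [Set.mem_setOf_eq] at this
    rw [hδ'def]; linarith [this]
  have hlt : spectralRadius ℂ (NormedSpace.exp Ac) < ENNReal.ofReal (Real.exp (-δ')) :=
    lt_of_le_of_lt hρ ((ENNReal.ofReal_lt_ofReal_iff (Real.exp_pos _)).mpr
      (Real.exp_lt_exp.mpr (by linarith)))
  have htend := spectrum.pow_nnnorm_pow_one_div_tendsto_nhds_spectralRadius (NormedSpace.exp Ac)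
  obtain ⟨j₀, hj₀lt, hj₀ge⟩ :=
    ((htend.eventually_lt_const hlt).and (Filter.eventually_ge_atTop 1)).exists
  have hj₀pos : (0 : ℝ) < j₀ := by exact_mod_cast hj₀ge
  -- ‖(exp Ac)^j₀‖ ≤ exp (-δ' * j₀)
  have hkey : ‖(NormedSpace.exp Ac) ^ j₀‖ ≤ Real.exp (-δ' * j₀) := by
    have h1 : ((‖(NormedSpace.exp Ac) ^ j₀‖₊ : ℝ≥0∞) ^ (1 / (j₀ : ℝ))) ^ (j₀ : ℝ)
        ≤ (ENNReal.ofReal (Real.exp (-δ'))) ^ (j₀ : ℝ) :=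
      ENNReal.rpow_le_rpow hj₀lt.le (by positivity)
    rw [← ENNReal.rpow_mul, one_div, inv_mul_cancel₀ (by exact_mod_cast hj₀pos.ne'),
      ENNReal.rpow_one] at h1
    rw [ENNReal.ofReal_rpow_of_pos (Real.exp_pos _), ← Real.exp_mul,
      ← ENNReal.ofReal_coe_nnreal, coe_nnnorm] at h1
    exact (ENNReal.ofReal_le_ofReal_iff (Real.exp_pos _).le).mp h1
  -- bound on compact piece
  obtain ⟨Mb, hMb⟩ := (isCompact_Icc (a := (0:ℝ)) (b := (j₀ : ℝ))).exists_bound_of_continuousOn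
    (f := fun s : ℝ => NormedSpace.exp (s • Ac))
    ((NormedSpace.exp_continuous.comp (continuous_id.smul continuous_const)).continuousOn)
  have hMb0 : 0 ≤ Mb := le_trans (norm_nonneg _) (hMb 0 (Set.mem_Icc.mpr ⟨le_refl _, by positivity⟩))
  refine ⟨max (Mb * Real.exp (δ' * j₀)) 1, le_max_right _ _, δ', hδ'pos, fun t ht => ?_⟩
  rw [norm_exp_real_eq, ← hAcdef]
  set j : ℕ := ⌊t / (j₀ : ℝ)⌋₊ with hjdef
  have hj1 : (j : ℝ) * j₀ ≤ t := by
    rw [hjdef]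
    have := Nat.floor_le (a := t / (j₀ : ℝ)) (by positivity)
    calc (⌊t / (j₀:ℝ)⌋₊ : ℝ) * j₀ ≤ (t / j₀) * j₀ := by nlinarith
      _ = t := by field_simp
  have hj2 : t < ((j : ℝ) + 1) * j₀ := by
    rw [hjdef]
    have := Nat.lt_floor_add_one (t / (j₀ : ℝ))
    calc t = (t / j₀) * j₀ := by field_simp
      _ < (((⌊t / (j₀:ℝ)⌋₊ : ℝ)) + 1) * j₀ := by nlinarith
  set s : ℝ := t - (j : ℝ) * j₀ with hsdef
  have hs0 : 0 ≤ s := by rw [hsdef]; linarith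
  have hsj : s ≤ (j₀ : ℝ) := by rw [hsdef]; nlinarith
  have hsplit : NormedSpace.exp (t • Ac)
      = (NormedSpace.exp Ac) ^ (j₀ * j) * NormedSpace.exp (s • Ac) := by
    have hcomm : Commute (((j : ℝ) * j₀) • Ac) (s • Ac) :=
      ((Commute.refl Ac).smul_left _).smul_right _
    have h1 : t • Ac = ((j : ℝ) * j₀) • Ac + s • Ac := by
      rw [← add_smul]; congr 1; rw [hsdef]; ring
    rw [h1, NormedSpace.exp_add_of_commute hcomm]
    congr 1
    have h2 : ((j : ℝ) * j₀) • Ac = (j₀ * j) • Ac := by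
      rw [← Nat.cast_smul_eq_nsmul ℝ]
      congr 1
      push_cast
      ring
    rw [h2, NormedSpace.exp_nsmul]
  rw [hsplit]
  calc ‖(NormedSpace.exp Ac) ^ (j₀ * j) * NormedSpace.exp (s • Ac)‖
      ≤ ‖(NormedSpace.exp Ac) ^ (j₀ * j)‖ * ‖NormedSpace.exp (s • Ac)‖ := norm_mul_le _ _
    _ ≤ ‖(NormedSpace.exp Ac) ^ j₀‖ ^ j * Mb := by
        refine mul_le_mul ?_ (hMb s (Set.mem_Icc.mpr ⟨hs0, hsj⟩)) (norm_nonneg _) (by positivity)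
        rw [pow_mul]
        haveI : NormOneClass (Matrix k k ℂ) := Matrix.linfty_opNormOneClass
        exact norm_pow_le _ _
    _ ≤ (Real.exp (-δ' * j₀)) ^ j * Mb := by
        refine mul_le_mul_of_nonneg_right (pow_le_pow_left₀ (norm_nonneg _) hkey j) hMb0
    _ = Mb * Real.exp (-δ' * (j₀ * j)) := by
        rw [← Real.exp_nat_mul]
        ring_nf
    _ ≤ Mb * Real.exp (δ' * j₀ + -δ' * t) := by
        refine mul_le_mul_of_nonneg_left (Real.exp_le_exp.mpr ?_) hMb0
        have : t ≤ (j : ℝ) * j₀ + j₀ := by nlinarith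
        nlinarith
    _ = (Mb * Real.exp (δ' * j₀)) * Real.exp (-δ' * t) := by
        rw [Real.exp_add]; ring
    _ ≤ max (Mb * Real.exp (δ' * j₀)) 1 * Real.exp (-δ' * t) := by
        refine mul_le_mul_of_nonneg_right (le_max_left _ _) (Real.exp_pos _).le

end Decay

section Perturb

variable {k : Type*} [Fintype k] [DecidableEq k]

lemma hasDerivAt_phi (A B : Matrix k k ℝ) (t s : ℝ) :
    HasDerivAt (fun s' : ℝ => NormedSpace.exp ((t - s') • A) * NormedSpace.exp (s' • B))
      (NormedSpace.exp ((t - s) • A) * (B - A) * NormedSpace.exp (s • B)) s := by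
  have h1 : HasDerivAt (fun s' : ℝ => NormedSpace.exp ((t - s') • A))
      ((-1 : ℝ) • (A * NormedSpace.exp ((t - s) • A))) s := by
    have hinner : HasDerivAt (fun s' : ℝ => t - s') (-1 : ℝ) s := by
      simpa using (hasDerivAt_id s).const_sub t
    exact (hasDerivAt_exp_smul_const' (𝕂 := ℝ) A (t - s)).scomp s hinner
  have h2 : HasDerivAt (fun s' : ℝ => NormedSpace.exp (s' • B))
      (B * NormedSpace.exp (s • B)) s := hasDerivAt_exp_smul_const' (𝕂 := ℝ) B s
  have h := h1.mul h2
  convert h using 1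
  case e'_4 => rfl
  case e'_5 => rfl
  case e'_6 => rfl
  case e'_8 => rfl
  have hcomm : NormedSpace.exp ((t - s) • A) * A = A * NormedSpace.exp ((t - s) • A) :=
    (((Commute.refl A).smul_left (t - s)).exp_left).eq
  rw [neg_one_smul, mul_sub, sub_mul, hcomm]
  noncomm_ring

lemma exp_continuous_aux (B : Matrix k k ℝ) :
    Continuous (fun s : ℝ => NormedSpace.exp (s • B)) :=
  NormedSpace.exp_continuous.comp (continuous_id.smul continuous_const)

lemma duhamel (A B : Matrix k k ℝ) (t : ℝ) :
    NormedSpace.exp (t • B) - NormedSpace.exp (t • A)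
      = ∫ s in (0:ℝ)..t,
          NormedSpace.exp ((t - s) • A) * (B - A) * NormedSpace.exp (s • B) := by
  have hFTC := intervalIntegral.integral_eq_sub_of_hasDerivAt
    (f := fun s' : ℝ => NormedSpace.exp ((t - s') • A) * NormedSpace.exp (s' • B))
    (f' := fun s' : ℝ =>
      NormedSpace.exp ((t - s') • A) * (B - A) * NormedSpace.exp (s' • B))
    (fun x _ => hasDerivAt_phi A B t x)
    (Continuous.intervalIntegrable (by
      exact ((exp_continuous_aux A).comp (continuous_const.sub continuous_id) |>.mul
        continuous_const).mul (exp_continuous_aux B)) 0 t)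
  rw [hFTC]
  simp [NormedSpace.exp_zero]

theorem decay_perturb (A B : Matrix k k ℝ) {C δ : ℝ} (hC : 1 ≤ C) (hδ : 0 < δ)
    (hdecay : ∀ t : ℝ, 0 ≤ t → ‖NormedSpace.exp (t • A)‖ ≤ C * Real.exp (-(2*δ) * t))
    (hBA : ‖B - A‖ ≤ δ / C) :
    ∀ t : ℝ, 0 ≤ t → ‖NormedSpace.exp (t • B)‖ ≤ C * Real.exp (-δ * t) := by
  set K : ℝ := C * ‖B - A‖ with hKdef
  have hK0 : 0 ≤ K := mul_nonneg (by linarith) (norm_nonneg _)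
  have hKδ : K ≤ δ := by
    rw [hKdef]
    calc C * ‖B - A‖ ≤ C * (δ / C) := by
          refine mul_le_mul_of_nonneg_left hBA (by linarith)
      _ = δ := by field_simp
  set u : ℝ → ℝ := fun τ => ‖NormedSpace.exp (τ • B)‖ * Real.exp (2 * δ * τ) with hudef
  have hu_cont : Continuous u := ((exp_continuous_aux B).norm).mul (by fun_prop)
  have hu0 : ∀ τ, 0 ≤ u τ := fun τ => mul_nonneg (norm_nonneg _) (Real.exp_pos _).le
  set v : ℝ → ℝ := fun τ => ∫ s in (0:ℝ)..τ, u s with hvdef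
  have hv0 : ∀ τ, 0 ≤ τ → 0 ≤ v τ := fun τ hτ =>
    intervalIntegral.integral_nonneg hτ (fun s _ => hu0 s)
  -- the integral inequality
  have hineq : ∀ τ, 0 ≤ τ → u τ ≤ C + K * v τ := by
    intro τ hτ
    have hid := duhamel A B τ
    have hnorm : ‖NormedSpace.exp (τ • B)‖
        ≤ C * Real.exp (-(2*δ) * τ) + ∫ s in (0:ℝ)..τ,
            (C * ‖B - A‖ * Real.exp (-(2*δ) * τ)) * u s := by
      have h1 : ‖NormedSpace.exp (τ • B)‖
          ≤ ‖NormedSpace.exp (τ • A)‖ + ‖NormedSpace.exp (τ • B) - NormedSpace.exp (τ • A)‖ := by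
        have := norm_sub_norm_le (NormedSpace.exp (τ • B)) (NormedSpace.exp (τ • A))
        linarith [norm_sub_rev (NormedSpace.exp (τ • B)) (NormedSpace.exp (τ • A)) ▸ this]
      rw [hid] at h1
      refine h1.trans (add_le_add (hdecay τ hτ) ?_)
      refine (intervalIntegral.norm_integral_le_integral_norm hτ).trans ?_
      refine intervalIntegral.integral_mono_on hτ ?_ ?_ ?_
      · exact Continuous.intervalIntegrable (by
          exact (((exp_continuous_aux A).comp (continuous_const.sub continuous_id) |>.mul
            continuous_const).mul (exp_continuous_aux B)).norm) 0 τ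
      · exact Continuous.intervalIntegrable (by fun_prop) 0 τ
      · intro s hs
        obtain ⟨hs0, hsτ⟩ := hs
        calc ‖NormedSpace.exp ((τ - s) • A) * (B - A) * NormedSpace.exp (s • B)‖
            ≤ ‖NormedSpace.exp ((τ - s) • A)‖ * ‖B - A‖ * ‖NormedSpace.exp (s • B)‖ := by
              refine (norm_mul_le _ _).trans ?_
              refine mul_le_mul_of_nonneg_right ((norm_mul_le _ _)) (norm_nonneg _)
          _ ≤ (C * Real.exp (-(2*δ) * (τ - s))) * ‖B - A‖ * ‖NormedSpace.exp (s • B)‖ := by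
              refine mul_le_mul_of_nonneg_right
                (mul_le_mul_of_nonneg_right (hdecay _ (by linarith)) (norm_nonneg _))
                (norm_nonneg _)
          _ = (C * ‖B - A‖ * Real.exp (-(2*δ) * τ)) * u s := by
              rw [hudef]
              simp only []
              rw [show Real.exp (-(2*δ) * (τ - s)) = Real.exp (-(2*δ) * τ) * Real.exp (2 * δ * s) by
                rw [← Real.exp_add]; ring_nf]
              ring
    -- multiply by exp (2δτ)
    have h2 : u τ ≤ (C * Real.exp (-(2*δ) * τ) + (C * ‖B - A‖ * Real.exp (-(2*δ) * τ)) * v τ)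
        * Real.exp (2 * δ * τ) := by
      rw [hudef]
      simp only []
      rw [intervalIntegral.integral_const_mul] at hnorm
      refine mul_le_mul_of_nonneg_right ?_ (Real.exp_pos _).le
      exact hnorm
    calc u τ ≤ (C * Real.exp (-(2*δ) * τ) + (C * ‖B - A‖ * Real.exp (-(2*δ) * τ)) * v τ)
        * Real.exp (2 * δ * τ) := h2
      _ = C + K * v τ := by
          rw [hKdef]
          have h1 : Real.exp (-(2*δ) * τ) * Real.exp (2 * δ * τ) = 1 := by
            rw [← Real.exp_add]; ring_nf; exact Real.exp_zero
          have h3 : (C * Real.exp (-(2*δ)*τ) + C*‖B-A‖*Real.exp (-(2*δ)*τ) * v τ)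
              * Real.exp (2*δ*τ)
              = C * (Real.exp (-(2*δ)*τ) * Real.exp (2*δ*τ))
                + C*‖B-A‖*(Real.exp (-(2*δ)*τ) * Real.exp (2*δ*τ)) * v τ := by ring
          rw [h3, h1]; ring
  -- Gronwall
  intro T hT
  have hvd : ∀ τ : ℝ, HasDerivAt v (u τ) τ := fun τ =>
    intervalIntegral.integral_hasDerivAt_right (hu_cont.intervalIntegrable 0 τ)
      (hu_cont.stronglyMeasurableAtFilter _ _) hu_cont.continuousAt
  have hv_cont : Continuous v := by
    have hdiff : Differentiable ℝ v := fun τ => (hvd τ).differentiableAt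
    exact hdiff.continuous
  have hgron := norm_le_gronwallBound_of_norm_deriv_right_le
    (f := v) (f' := u) (δ := 0) (K := K) (ε := C) (a := 0) (b := T)
    (hv_cont.continuousOn)
    (fun τ _ => (hvd τ).hasDerivWithinAt)
    (by simp [hvdef])
    (by
      intro x hx
      rw [Real.norm_of_nonneg (hu0 x), Real.norm_of_nonneg (hv0 x hx.1)]
      linarith [hineq x hx.1])
  have hvT := hgron T (Set.mem_Icc.mpr ⟨hT, le_refl T⟩)
  rw [Real.norm_of_nonneg (hv0 T hT), sub_zero] at hvT
  have huT : u T ≤ C + K * v T := hineq T hT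
  have hbound : u T ≤ C * Real.exp (δ * T) := by
    rcases eq_or_ne K 0 with hK | hK
    · rw [hK] at huT
      calc u T ≤ C := by linarith
        _ ≤ C * Real.exp (δ * T) := le_mul_of_one_le_right (by linarith)
            (Real.one_le_exp (by positivity))
    · rw [gronwallBound_of_K_ne_0 hK] at hvT
      have hKpos : 0 < K := lt_of_le_of_ne hK0 (Ne.symm hK)
      have h4 : u T ≤ C + K * (0 * Real.exp (K * T) + C / K * (Real.exp (K * T) - 1)) := by
        refine huT.trans ?_
        have := mul_le_mul_of_nonneg_left hvT hK0
        linarith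
      have h5 : C + K * (0 * Real.exp (K*T) + C / K * (Real.exp (K*T) - 1))
          = C * Real.exp (K*T) := by field_simp; ring
      rw [h5] at h4
      refine h4.trans ?_
      refine mul_le_mul_of_nonneg_left (Real.exp_le_exp.mpr ?_) (by linarith)
      nlinarith
  have hfin : ‖NormedSpace.exp (T • B)‖ * Real.exp (2*δ*T) ≤ C * Real.exp (δ * T) := hbound
  have hexp : Real.exp (δ * T) = Real.exp (-δ * T) * Real.exp (2 * δ * T) := by
    rw [← Real.exp_add]; ring_nf
  rw [hexp, ← mul_assoc] at hfin
  exact le_of_mul_le_mul_right hfin (Real.exp_pos _)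

end Perturb

section Gram

open Set

variable {k : Type*} [Fintype k] [DecidableEq k]

lemma decay_transpose {A : Matrix k k ℝ} {C δ : ℝ}
    (hdec : ∀ t : ℝ, 0 ≤ t → ‖NormedSpace.exp (t • A)‖ ≤ C * Real.exp (-δ * t)) :
    ∀ t : ℝ, 0 ≤ t → ‖NormedSpace.exp (t • Aᵀ)‖
      ≤ (Fintype.card k * C) * Real.exp (-δ * t) := by
  intro t ht
  have h1 : NormedSpace.exp (t • Aᵀ) = (NormedSpace.exp (t • A))ᵀ := by
    rw [← Matrix.transpose_smul, ← exp_bridge, Matrix.exp_transpose, exp_bridge]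
  rw [h1]
  calc ‖(NormedSpace.exp (t • A))ᵀ‖ ≤ (Fintype.card k) * ‖NormedSpace.exp (t • A)‖ :=
        norm_transpose_le _
    _ ≤ (Fintype.card k) * (C * Real.exp (-δ * t)) := by
        refine mul_le_mul_of_nonneg_left (hdec t ht) (by positivity)
    _ = (Fintype.card k * C) * Real.exp (-δ * t) := by ring

lemma gram_integrand_continuous (A : Matrix k k ℝ) (S : Matrix k k ℝ) :
    Continuous (fun t : ℝ => NormedSpace.exp (t • A) * S * NormedSpace.exp (t • Aᵀ)) :=
  ((exp_continuous_aux A).mul continuous_const).mul (exp_continuous_aux Aᵀ)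

lemma gram_integrand_bound {A : Matrix k k ℝ} {C δ : ℝ} (hC : 0 ≤ C)
    (hdec : ∀ t : ℝ, 0 ≤ t → ‖NormedSpace.exp (t • A)‖ ≤ C * Real.exp (-δ * t))
    (S : Matrix k k ℝ) :
    ∀ t : ℝ, 0 ≤ t → ‖NormedSpace.exp (t • A) * S * NormedSpace.exp (t • Aᵀ)‖
      ≤ (C * (Fintype.card k * C) * ‖S‖) * Real.exp (-(2 * δ) * t) := by
  intro t ht
  have h1 := hdec t ht
  have h2 := decay_transpose hdec t ht
  calc ‖NormedSpace.exp (t • A) * S * NormedSpace.exp (t • Aᵀ)‖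
      ≤ ‖NormedSpace.exp (t • A)‖ * ‖S‖ * ‖NormedSpace.exp (t • Aᵀ)‖ :=
        (norm_mul_le _ _).trans (mul_le_mul_of_nonneg_right (norm_mul_le _ _) (norm_nonneg _))
    _ ≤ (C * Real.exp (-δ * t)) * ‖S‖ * ((Fintype.card k * C) * Real.exp (-δ * t)) := by
        refine mul_le_mul ?_ h2 (norm_nonneg _) (by positivity)
        exact mul_le_mul_of_nonneg_right h1 (norm_nonneg _)
    _ = (C * (Fintype.card k * C) * ‖S‖) * (Real.exp (-δ * t) * Real.exp (-δ * t)) := by ring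
    _ = (C * (Fintype.card k * C) * ‖S‖) * Real.exp (-(2 * δ) * t) := by
        rw [← Real.exp_add]; ring_nf

lemma gram_integrable {A : Matrix k k ℝ} {C δ : ℝ} (hC : 0 ≤ C) (hδ : 0 < δ)
    (hdec : ∀ t : ℝ, 0 ≤ t → ‖NormedSpace.exp (t • A)‖ ≤ C * Real.exp (-δ * t))
    (S : Matrix k k ℝ) :
    IntegrableOn (fun t : ℝ => NormedSpace.exp (t • A) * S * NormedSpace.exp (t • Aᵀ))
      (Ioi (0:ℝ)) := by
  refine Integrable.mono'
    (((exp_neg_integrableOn_Ioi 0 (by positivity : (0:ℝ) < 2 * δ))).const_mul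
      (C * (Fintype.card k * C) * ‖S‖))
    ((gram_integrand_continuous A S).aestronglyMeasurable.restrict) ?_
  rw [MeasureTheory.ae_restrict_iff' measurableSet_Ioi]
  exact MeasureTheory.ae_of_all _ fun t ht => gram_integrand_bound hC hdec S t (le_of_lt ht)

lemma gram_hasDerivAt (A : Matrix k k ℝ) (S : Matrix k k ℝ) (t : ℝ) :
    HasDerivAt (fun t : ℝ => NormedSpace.exp (t • A) * S * NormedSpace.exp (t • Aᵀ))
      (A * (NormedSpace.exp (t • A) * S * NormedSpace.exp (t • Aᵀ))
        + (NormedSpace.exp (t • A) * S * NormedSpace.exp (t • Aᵀ)) * Aᵀ) t := by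
  have h1 : HasDerivAt (fun t : ℝ => NormedSpace.exp (t • A) * S)
      (A * NormedSpace.exp (t • A) * S) t :=
    (hasDerivAt_exp_smul_const' (𝕂 := ℝ) A t).mul_const S
  have h2 := (h1.mul (hasDerivAt_exp_smul_const (𝕂 := ℝ) Aᵀ t))
  convert h2 using 1
  case e'_4 => rfl
  case e'_5 => rfl
  case e'_6 => rfl
  case e'_8 => rfl
  noncomm_ring

lemma gram_tendsto_zero {A : Matrix k k ℝ} {C δ : ℝ} (hC : 0 ≤ C) (hδ : 0 < δ)
    (hdec : ∀ t : ℝ, 0 ≤ t → ‖NormedSpace.exp (t • A)‖ ≤ C * Real.exp (-δ * t))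
    (S : Matrix k k ℝ) :
    Filter.Tendsto (fun t : ℝ => NormedSpace.exp (t • A) * S * NormedSpace.exp (t • Aᵀ))
      Filter.atTop (nhds 0) := by
  have hb : Filter.Tendsto (fun t : ℝ => (C * (Fintype.card k * C) * ‖S‖)
      * Real.exp (-(2 * δ) * t)) Filter.atTop (nhds 0) := by
    rw [show (0:ℝ) = (C * (Fintype.card k * C) * ‖S‖) * 0 by ring]
    refine Filter.Tendsto.const_mul _ ?_
    refine Real.tendsto_exp_atBot.comp ?_
    exact Filter.tendsto_atBot_mono (fun t => le_refl _)
      (Filter.Tendsto.const_mul_atTop_of_neg (by linarith : -(2*δ) < 0) Filter.tendsto_id)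
  refine squeeze_zero_norm' ?_ hb
  filter_upwards [Filter.eventually_ge_atTop (0:ℝ)] with t ht
  exact gram_integrand_bound hC hdec S t ht

end Gram

section Gram2

open Set

variable {k : Type*} [Fintype k] [DecidableEq k]

lemma integral_mul_left_comm {A : Matrix k k ℝ} {g : ℝ → Matrix k k ℝ}
    (hint : IntegrableOn g (Ioi (0:ℝ))) :
    ∫ t in Ioi (0:ℝ), A * g t = A * ∫ t in Ioi (0:ℝ), g t := by
  have h := ContinuousLinearMap.integral_comp_comm
    (LinearMap.toContinuousLinearMap (LinearMap.mulLeft ℝ A)) hint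
  simpa using h

lemma integral_mul_right_comm {A : Matrix k k ℝ} {g : ℝ → Matrix k k ℝ}
    (hint : IntegrableOn g (Ioi (0:ℝ))) :
    ∫ t in Ioi (0:ℝ), g t * A = (∫ t in Ioi (0:ℝ), g t) * A := by
  have h := ContinuousLinearMap.integral_comp_comm
    (LinearMap.toContinuousLinearMap (LinearMap.mulRight ℝ A)) hint
  simpa using h

lemma mul_integrable_left {A : Matrix k k ℝ} {g : ℝ → Matrix k k ℝ}
    (hint : IntegrableOn g (Ioi (0:ℝ))) :
    IntegrableOn (fun t => A * g t) (Ioi (0:ℝ)) := by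
  have h := ContinuousLinearMap.integrable_comp
    (LinearMap.toContinuousLinearMap (LinearMap.mulLeft ℝ A)) hint
  simpa [IntegrableOn] using h

lemma mul_integrable_right {A : Matrix k k ℝ} {g : ℝ → Matrix k k ℝ}
    (hint : IntegrableOn g (Ioi (0:ℝ))) :
    IntegrableOn (fun t => g t * A) (Ioi (0:ℝ)) := by
  have h := ContinuousLinearMap.integrable_comp
    (LinearMap.toContinuousLinearMap (LinearMap.mulRight ℝ A)) hint
  simpa [IntegrableOn] using h

lemma gram_lyap {A : Matrix k k ℝ} {C δ : ℝ} (hC : 0 ≤ C) (hδ : 0 < δ)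
    (hdec : ∀ t : ℝ, 0 ≤ t → ‖NormedSpace.exp (t • A)‖ ≤ C * Real.exp (-δ * t))
    (S : Matrix k k ℝ) :
    A * (∫ t in Ioi (0:ℝ), NormedSpace.exp (t • A) * S * NormedSpace.exp (t • Aᵀ))
      + (∫ t in Ioi (0:ℝ), NormedSpace.exp (t • A) * S * NormedSpace.exp (t • Aᵀ)) * Aᵀ
      + S = 0 := by
  set g := fun t : ℝ => NormedSpace.exp (t • A) * S * NormedSpace.exp (t • Aᵀ) with hg
  have hint : IntegrableOn g (Ioi (0:ℝ)) := gram_integrable hC hδ hdec S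
  have h1 : IntegrableOn (fun t => A * g t) (Ioi (0:ℝ)) := mul_integrable_left hint
  have h2 : IntegrableOn (fun t => g t * Aᵀ) (Ioi (0:ℝ)) := mul_integrable_right hint
  have hFTC := MeasureTheory.integral_Ioi_of_hasDerivAt_of_tendsto
    (f := g) (f' := fun t => A * g t + g t * Aᵀ) (a := 0) (m := 0)
    ((gram_integrand_continuous A S).continuousWithinAt)
    (fun t _ => gram_hasDerivAt A S t)
    (h1.add h2)
    (gram_tendsto_zero hC hδ hdec S)
  have hg0 : g 0 = S := by
    rw [hg]
    simp [NormedSpace.exp_zero]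
  rw [hg0] at hFTC
  rw [MeasureTheory.integral_add h1 h2, integral_mul_left_comm hint,
    integral_mul_right_comm hint] at hFTC
  have hgoal : A * (∫ t in Ioi (0:ℝ), g t) + (∫ t in Ioi (0:ℝ), g t) * Aᵀ + S = 0 := by
    rw [hFTC]; abel
  exact hgoal

lemma lyap_unique {A : Matrix k k ℝ} {C δ : ℝ} (hC : 0 ≤ C) (hδ : 0 < δ)
    (hdec : ∀ t : ℝ, 0 ≤ t → ‖NormedSpace.exp (t • A)‖ ≤ C * Real.exp (-δ * t))
    {S X Y : Matrix k k ℝ}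
    (hX : A * X + X * Aᵀ + S = 0) (hY : A * Y + Y * Aᵀ + S = 0) : X = Y := by
  set D := X - Y with hD
  have hlyap : A * D + D * Aᵀ = 0 := by
    rw [hD, Matrix.mul_sub, Matrix.sub_mul]
    rw [show A*X - A*Y + (X*Aᵀ - Y*Aᵀ) = (A*X + X*Aᵀ + S) - (A*Y + Y*Aᵀ + S) from by abel]
    rw [hX, hY, sub_zero]
  set h := fun t : ℝ => NormedSpace.exp (t • A) * D * NormedSpace.exp (t • Aᵀ) with hh
  have hder : ∀ t : ℝ, HasDerivAt h 0 t := by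
    intro t
    have h0 := gram_hasDerivAt A D t
    have heq : A * (NormedSpace.exp (t • A) * D * NormedSpace.exp (t • Aᵀ))
        + (NormedSpace.exp (t • A) * D * NormedSpace.exp (t • Aᵀ)) * Aᵀ = 0 := by
      have hcommA : A * NormedSpace.exp (t • A) = NormedSpace.exp (t • A) * A :=
        (((Commute.refl A).smul_right t).exp_right).eq
      have hcommAT : NormedSpace.exp (t • Aᵀ) * Aᵀ = Aᵀ * NormedSpace.exp (t • Aᵀ) :=
        (((Commute.refl Aᵀ).smul_left t).exp_left).eq
      calc A * (NormedSpace.exp (t • A) * D * NormedSpace.exp (t • Aᵀ))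
          + (NormedSpace.exp (t • A) * D * NormedSpace.exp (t • Aᵀ)) * Aᵀ
          = (A * NormedSpace.exp (t • A)) * D * NormedSpace.exp (t • Aᵀ)
            + NormedSpace.exp (t • A) * D * (NormedSpace.exp (t • Aᵀ) * Aᵀ) := by
            noncomm_ring
        _ = NormedSpace.exp (t • A) * (A * D + D * Aᵀ) * NormedSpace.exp (t • Aᵀ) := by
            rw [hcommA, hcommAT]; noncomm_ring
        _ = 0 := by rw [hlyap]; simp
    rw [← heq]
    exact h0
  have hconst : ∀ t : ℝ, h t = h 0 := by
    intro t
    have : ∀ s : ℝ, HasDerivAt h ((fun _ => (0 : Matrix k k ℝ)) s) s := fun s => hder s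
    exact is_const_of_deriv_eq_zero (fun s => (hder s).differentiableAt)
      (fun s => (hder s).deriv) t 0
  have h0val : h 0 = D := by rw [hh]; simp [NormedSpace.exp_zero]
  have htend : Filter.Tendsto h Filter.atTop (nhds 0) := gram_tendsto_zero hC hδ hdec D
  have htend2 : Filter.Tendsto h Filter.atTop (nhds D) := by
    rw [show h = fun _ => D from funext fun t => (hconst t).trans h0val]
    exact tendsto_const_nhds
  have hD0 : D = 0 := tendsto_nhds_unique htend2 htend
  exact sub_eq_zero.mp (by rw [← hD]; exact hD0)

end Gram2

section Gram3

open Set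

variable {k : Type*} [Fintype k] [DecidableEq k]

lemma trace_integral_comm {g : ℝ → Matrix k k ℝ} (hint : IntegrableOn g (Ioi (0:ℝ))) :
    (∫ t in Ioi (0:ℝ), g t).trace = ∫ t in Ioi (0:ℝ), (g t).trace := by
  have h := ContinuousLinearMap.integral_comp_comm
    (LinearMap.toContinuousLinearMap (Matrix.traceLinearMap k ℝ ℝ)) hint
  simpa using h.symm

lemma trace_integrable {g : ℝ → Matrix k k ℝ} (hint : IntegrableOn g (Ioi (0:ℝ))) :
    IntegrableOn (fun t => (g t).trace) (Ioi (0:ℝ)) := by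
  have h := ContinuousLinearMap.integrable_comp
    (LinearMap.toContinuousLinearMap (Matrix.traceLinearMap k ℝ ℝ)) hint
  simpa [IntegrableOn] using h

lemma gram_norm_le {A : Matrix k k ℝ} {C δ : ℝ} (hC : 0 ≤ C) (hδ : 0 < δ)
    (hdec : ∀ t : ℝ, 0 ≤ t → ‖NormedSpace.exp (t • A)‖ ≤ C * Real.exp (-δ * t))
    (S : Matrix k k ℝ) :
    ‖∫ t in Ioi (0:ℝ), NormedSpace.exp (t • A) * S * NormedSpace.exp (t • Aᵀ)‖
      ≤ (C * (Fintype.card k * C) * (∫ t in Ioi (0:ℝ), Real.exp (-(2*δ) * t))) * ‖S‖ := by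
  have hb := MeasureTheory.norm_integral_le_of_norm_le
    (f := fun t : ℝ => NormedSpace.exp (t • A) * S * NormedSpace.exp (t • Aᵀ))
    (g := fun t : ℝ => (C * (Fintype.card k * C) * ‖S‖) * Real.exp (-(2*δ) * t))
    ((exp_neg_integrableOn_Ioi 0 (by positivity : (0:ℝ) < 2 * δ)).const_mul _)
    (by
      rw [MeasureTheory.ae_restrict_iff' measurableSet_Ioi]
      exact MeasureTheory.ae_of_all _ fun t ht => gram_integrand_bound hC hdec S t (le_of_lt ht))
  refine hb.trans ?_
  rw [MeasureTheory.integral_const_mul]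
  have h2 : 0 ≤ ∫ t in Ioi (0:ℝ), Real.exp (-(2*δ) * t) :=
    MeasureTheory.integral_nonneg fun t => (Real.exp_pos _).le
  nlinarith [norm_nonneg S]

lemma gram_trace_swap {A : Matrix k k ℝ} {C δ : ℝ} (hC : 0 ≤ C) (hδ : 0 < δ)
    (hdec : ∀ t : ℝ, 0 ≤ t → ‖NormedSpace.exp (t • A)‖ ≤ C * Real.exp (-δ * t))
    (W S : Matrix k k ℝ) :
    (W * ∫ t in Ioi (0:ℝ), NormedSpace.exp (t • A) * S * NormedSpace.exp (t • Aᵀ)).trace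
      = ((∫ t in Ioi (0:ℝ),
          NormedSpace.exp (t • Aᵀ) * W * NormedSpace.exp (t • Aᵀᵀ)) * S).trace := by
  have hint : IntegrableOn
      (fun t : ℝ => NormedSpace.exp (t • A) * S * NormedSpace.exp (t • Aᵀ)) (Ioi (0:ℝ)) :=
    gram_integrable hC hδ hdec S
  have hdecT := decay_transpose hdec
  have hintT : IntegrableOn
      (fun t : ℝ => NormedSpace.exp (t • Aᵀ) * W * NormedSpace.exp (t • Aᵀᵀ)) (Ioi (0:ℝ)) :=
    gram_integrable (by positivity) hδ hdecT W
  rw [← integral_mul_left_comm hint, ← integral_mul_right_comm hintT,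
    trace_integral_comm (mul_integrable_left hint), trace_integral_comm (mul_integrable_right hintT)]
  refine MeasureTheory.setIntegral_congr_fun measurableSet_Ioi fun t _ => ?_
  show (W * (NormedSpace.exp (t • A) * S * NormedSpace.exp (t • Aᵀ))).trace
      = ((NormedSpace.exp (t • Aᵀ) * W * NormedSpace.exp (t • Aᵀᵀ)) * S).trace
  rw [Matrix.transpose_transpose]
  rw [show W * (NormedSpace.exp (t • A) * S * NormedSpace.exp (t • Aᵀ))
      = (W * NormedSpace.exp (t • A) * S) * NormedSpace.exp (t • Aᵀ) from by noncomm_ring]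
  rw [Matrix.trace_mul_comm]
  rw [show NormedSpace.exp (t • Aᵀ) * (W * NormedSpace.exp (t • A) * S)
      = (NormedSpace.exp (t • Aᵀ) * W * NormedSpace.exp (t • A)) * S from by noncomm_ring]

end Gram3

section Main

open Set

variable {k : Type*} [Fintype k] [DecidableEq k]

set_option maxHeartbeats 2000000 in
lemma main_deriv (A₀ Δ SB W : Matrix k k ℝ) (hA₀ : A₀.IsHurwitz)
    (Pm Qm : Matrix k k ℝ)
    (hPm : A₀ * Pm + Pm * A₀ᵀ + SB = 0) (hQm : A₀ᵀ * Qm + Qm * A₀ + W = 0) :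
    HasDerivAt (fun ε : ℝ => (W * ∫ t in Ioi (0:ℝ),
        NormedSpace.exp (t • (A₀ + ε • Δ)) * SB
          * NormedSpace.exp (t • (A₀ + ε • Δ)ᵀ)).trace)
      ((Qm * (Δ * Pm + Pm * Δᵀ)).trace) 0 := by
  obtain ⟨C, hC1, δ, hδ, hdec⟩ := hurwitz_decay A₀ hA₀
  have hC0 : (0:ℝ) ≤ C := by linarith
  set δ2 : ℝ := δ / 2 with hδ2def
  have hδ2 : 0 < δ2 := by rw [hδ2def]; linarith
  have hdec2 : ∀ t : ℝ, 0 ≤ t → ‖NormedSpace.exp (t • A₀)‖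
      ≤ C * Real.exp (-(2 * δ2) * t) := by
    intro t ht
    have := hdec t ht
    rw [show -(2 * δ2) * t = -δ * t by rw [hδ2def]; ring]
    exact this
  have hdec2' : ∀ t : ℝ, 0 ≤ t → ‖NormedSpace.exp (t • A₀)‖
      ≤ C * Real.exp (-δ2 * t) := by
    intro t ht
    refine (hdec2 t ht).trans ?_
    refine mul_le_mul_of_nonneg_left (Real.exp_le_exp.mpr ?_) hC0
    nlinarith
  set ε₀ : ℝ := (δ2 / C) / (‖Δ‖ + 1) with hε₀def
  have hε₀pos : 0 < ε₀ := by
    rw [hε₀def]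
    have h1 : 0 < δ2 / C := by positivity
    positivity
  set Aε : ℝ → Matrix k k ℝ := fun ε => A₀ + ε • Δ with hAεdef
  have hAεdec : ∀ ε : ℝ, |ε| ≤ ε₀ → ∀ t : ℝ, 0 ≤ t →
      ‖NormedSpace.exp (t • Aε ε)‖ ≤ C * Real.exp (-δ2 * t) := by
    intro ε hε
    refine decay_perturb A₀ (Aε ε) hC1 hδ2 hdec2 ?_
    rw [hAεdef]
    simp only [add_sub_cancel_left]
    rw [norm_smul, Real.norm_eq_abs]
    calc |ε| * ‖Δ‖ ≤ ε₀ * (‖Δ‖ + 1) := by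
          refine mul_le_mul hε (by linarith) (norm_nonneg _) (le_of_lt hε₀pos)
      _ = δ2 / C := by rw [hε₀def]; field_simp
  set P : ℝ → Matrix k k ℝ := fun ε => ∫ t in Ioi (0:ℝ),
    NormedSpace.exp (t • Aε ε) * SB * NormedSpace.exp (t • (Aε ε)ᵀ) with hPdef
  have hlyapε : ∀ ε : ℝ, |ε| ≤ ε₀ →
      Aε ε * P ε + P ε * (Aε ε)ᵀ + SB = 0 := fun ε hε =>
    gram_lyap hC0 hδ2 (hAεdec ε hε) SB
  have hA0eq : Aε 0 = A₀ := by rw [hAεdef]; simp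
  have hP0 : P 0 = Pm := by
    have h0 : |(0:ℝ)| ≤ ε₀ := by simp [le_of_lt hε₀pos]
    have hl := hlyapε 0 h0
    rw [hA0eq] at hl
    exact lyap_unique hC0 hδ2 hdec2' hl hPm
  -- uniform bound on P ε
  set K₁ : ℝ := (C * (Fintype.card k * C)
    * (∫ t in Ioi (0:ℝ), Real.exp (-(2*δ2) * t))) * ‖SB‖ with hK₁def
  have hPbound : ∀ ε : ℝ, |ε| ≤ ε₀ → ‖P ε‖ ≤ K₁ := fun ε hε =>
    gram_norm_le hC0 hδ2 (hAεdec ε hε) SB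
  -- identification of Q
  have hdecT := decay_transpose hdec2'
  have hQ : (∫ t in Ioi (0:ℝ),
      NormedSpace.exp (t • A₀ᵀ) * W * NormedSpace.exp (t • A₀ᵀᵀ)) = Qm := by
    have hlyapQ := gram_lyap (by positivity) hδ2 hdecT W
    have hQm' : A₀ᵀ * Qm + Qm * A₀ᵀᵀ + W = 0 := by
      rw [Matrix.transpose_transpose]; exact hQm
    exact lyap_unique (by positivity) hδ2 hdecT hlyapQ hQm'
  -- difference identity
  have hlyapdiff : ∀ ε : ℝ, |ε| ≤ ε₀ →
      A₀ * (P ε - Pm) + (P ε - Pm) * A₀ᵀ + ε • (Δ * P ε + P ε * Δᵀ) = 0 := by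
    intro ε hε
    have h1 := hlyapε ε hε
    rw [hAεdef] at h1
    simp only [Matrix.transpose_add, Matrix.transpose_smul] at h1
    have key : A₀ * (P ε - Pm) + (P ε - Pm) * A₀ᵀ + ε • (Δ * P ε + P ε * Δᵀ)
        = ((A₀ + ε • Δ) * P ε + P ε * (A₀ᵀ + ε • Δᵀ) + SB)
          - (A₀ * Pm + Pm * A₀ᵀ + SB) := by
      rw [Matrix.add_mul, Matrix.mul_add, Matrix.smul_mul, Matrix.mul_smul,
        Matrix.mul_sub, Matrix.sub_mul, smul_add]
      abel
    rw [key, h1, hPm, sub_zero]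
  have hdiff : ∀ ε : ℝ, |ε| ≤ ε₀ → P ε - Pm = ∫ t in Ioi (0:ℝ),
      NormedSpace.exp (t • A₀) * (ε • (Δ * P ε + P ε * Δᵀ))
        * NormedSpace.exp (t • A₀ᵀ) := by
    intro ε hε
    exact lyap_unique hC0 hδ2 hdec2' (hlyapdiff ε hε)
      (gram_lyap hC0 hδ2 hdec2' (ε • (Δ * P ε + P ε * Δᵀ)))
  -- norm of difference
  set K₀ : ℝ := C * (Fintype.card k * C) * (∫ t in Ioi (0:ℝ), Real.exp (-(2*δ2) * t))
    with hK₀def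
  have hIpos : 0 ≤ ∫ t in Ioi (0:ℝ), Real.exp (-(2*δ2) * t) :=
    MeasureTheory.integral_nonneg fun t => (Real.exp_pos _).le
  have hK₀0 : 0 ≤ K₀ := by rw [hK₀def]; positivity
  have hK₁0 : 0 ≤ K₁ := by rw [hK₁def, hK₀def]; positivity
  set cΔ : ℝ := ‖Δ‖ + ‖Δᵀ‖ with hcΔdef
  have hcΔ0 : (0:ℝ) ≤ cΔ := by rw [hcΔdef]; positivity
  have hSbound : ∀ ε : ℝ, |ε| ≤ ε₀ → ‖Δ * P ε + P ε * Δᵀ‖ ≤ cΔ * K₁ := by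
    intro ε hε
    calc ‖Δ * P ε + P ε * Δᵀ‖ ≤ ‖Δ * P ε‖ + ‖P ε * Δᵀ‖ := norm_add_le _ _
      _ ≤ ‖Δ‖ * ‖P ε‖ + ‖P ε‖ * ‖Δᵀ‖ := add_le_add (norm_mul_le _ _) (norm_mul_le _ _)
      _ ≤ ‖Δ‖ * K₁ + K₁ * ‖Δᵀ‖ := by
          refine add_le_add (mul_le_mul_of_nonneg_left (hPbound ε hε) (norm_nonneg _))
            (mul_le_mul_of_nonneg_right (hPbound ε hε) (norm_nonneg _))
      _ = cΔ * K₁ := by rw [hcΔdef]; ring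
  have hgen_bound : ∀ ε : ℝ, ∀ M : Matrix k k ℝ,
      ‖∫ t in Ioi (0:ℝ), NormedSpace.exp (t • A₀) * (ε • M)
        * NormedSpace.exp (t • A₀ᵀ)‖ ≤ K₀ * (|ε| * ‖M‖) := by
    intro ε M
    refine (gram_norm_le hC0 hδ2 hdec2' _).trans ?_
    rw [← hK₀def, norm_smul, Real.norm_eq_abs]
  have hDbound : ∀ ε : ℝ, |ε| ≤ ε₀ → ‖P ε - Pm‖ ≤ |ε| * (K₀ * (cΔ * K₁)) := by
    intro ε hε
    rw [hdiff ε hε]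
    refine (hgen_bound ε _).trans ?_
    have := hSbound ε hε
    calc K₀ * (|ε| * ‖Δ * P ε + P ε * Δᵀ‖) ≤ K₀ * (|ε| * (cΔ * K₁)) := by
          refine mul_le_mul_of_nonneg_left (mul_le_mul_of_nonneg_left this (abs_nonneg _)) hK₀0
      _ = |ε| * (K₀ * (cΔ * K₁)) := by ring
  -- trace identity
  set L : ℝ := (Qm * (Δ * Pm + Pm * Δᵀ)).trace with hLdef
  have htrace : ∀ ε : ℝ, |ε| ≤ ε₀ →
      (W * P ε).trace - (W * P 0).trace = ε * (Qm * (Δ * P ε + P ε * Δᵀ)).trace := by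
    intro ε hε
    rw [hP0]
    rw [show (W * P ε).trace - (W * Pm).trace = (W * (P ε - Pm)).trace by
      rw [Matrix.mul_sub, Matrix.trace_sub]]
    rw [hdiff ε hε, gram_trace_swap hC0 hδ2 hdec2' W _, hQ, Matrix.mul_smul,
      Matrix.trace_smul, smul_eq_mul]
  -- quadratic error bound
  set K₃ : ℝ := (Fintype.card k) * (‖Qm‖ * (cΔ * (K₀ * (cΔ * K₁)))) with hK₃def
  have hK₃0 : 0 ≤ K₃ := by
    rw [hK₃def]
    positivity
  have hKey : ∀ ε : ℝ, |ε| ≤ ε₀ →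
      |(W * P ε).trace - (W * P 0).trace - ε * L| ≤ ε^2 * K₃ := by
    intro ε hε
    rw [htrace ε hε, hLdef]
    rw [show ε * (Qm * (Δ * P ε + P ε * Δᵀ)).trace
        - ε * (Qm * (Δ * Pm + Pm * Δᵀ)).trace
        = ε * ((Qm * (Δ * (P ε - Pm) + (P ε - Pm) * Δᵀ)).trace) by
      rw [show Qm * (Δ * (P ε - Pm) + (P ε - Pm) * Δᵀ)
          = Qm * (Δ * P ε + P ε * Δᵀ) - Qm * (Δ * Pm + Pm * Δᵀ) by noncomm_ring]
      rw [Matrix.trace_sub]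
      ring]
    rw [abs_mul]
    have h1 : |(Qm * (Δ * (P ε - Pm) + (P ε - Pm) * Δᵀ)).trace|
        ≤ (Fintype.card k) * (‖Qm‖ * (cΔ * (|ε| * (K₀ * (cΔ * K₁))))) := by
      refine (abs_trace_le _).trans ?_
      refine mul_le_mul_of_nonneg_left ?_ (by positivity)
      refine (norm_mul_le _ _).trans ?_
      refine mul_le_mul_of_nonneg_left ?_ (norm_nonneg _)
      calc ‖Δ * (P ε - Pm) + (P ε - Pm) * Δᵀ‖
          ≤ ‖Δ‖ * ‖P ε - Pm‖ + ‖P ε - Pm‖ * ‖Δᵀ‖ :=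
            (norm_add_le _ _).trans (add_le_add (norm_mul_le _ _) (norm_mul_le _ _))
        _ = cΔ * ‖P ε - Pm‖ := by rw [hcΔdef]; ring
        _ ≤ cΔ * (|ε| * (K₀ * (cΔ * K₁))) :=
            mul_le_mul_of_nonneg_left (hDbound ε hε) hcΔ0
    calc |ε| * |(Qm * (Δ * (P ε - Pm) + (P ε - Pm) * Δᵀ)).trace|
        ≤ |ε| * ((Fintype.card k) * (‖Qm‖ * (cΔ * (|ε| * (K₀ * (cΔ * K₁)))))) :=
          mul_le_mul_of_nonneg_left h1 (abs_nonneg _)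
      _ = ε^2 * K₃ := by
          have habs : |ε| * |ε| = ε^2 := by rw [← sq_abs]; ring
          rw [hK₃def, ← habs]; ring
  -- conclude HasDerivAt
  rw [hasDerivAt_iff_isLittleO]
  rw [Asymptotics.isLittleO_iff]
  intro c hc
  have hev : ∀ᶠ ε : ℝ in nhds 0, |ε| ≤ min ε₀ (c / (K₃ + 1)) := by
    have hpos : 0 < min ε₀ (c / (K₃ + 1)) := lt_min hε₀pos (by positivity)
    filter_upwards [Metric.ball_mem_nhds (0:ℝ) hpos] with ε hε
    rw [Metric.mem_ball, Real.dist_eq, sub_zero] at hε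
    exact hε.le
  filter_upwards [hev] with ε hε
  have hε1 : |ε| ≤ ε₀ := le_trans hε (min_le_left _ _)
  have hε2 : |ε| ≤ c / (K₃ + 1) := le_trans hε (min_le_right _ _)
  have hk := hKey ε hε1
  simp only [sub_zero, smul_eq_mul]
  rw [Real.norm_eq_abs, Real.norm_eq_abs]
  refine le_trans hk ?_
  calc ε^2 * K₃ = |ε| * (|ε| * K₃) := by rw [← sq_abs]; ring
    _ ≤ |ε| * c := by
        refine mul_le_mul_of_nonneg_left ?_ (abs_nonneg _)
        calc |ε| * K₃ ≤ (c / (K₃ + 1)) * (K₃ + 1) := by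
              refine mul_le_mul hε2 (by linarith) hK₃0 (by positivity)
          _ = c := by field_simp
    _ = c * |ε| := by ring

end Main

section Blocks

variable {k l : Type*} [Fintype k] [DecidableEq k] [Fintype l] [DecidableEq l]

lemma mem_spectrum_iff_det {M : Matrix k k ℂ} {z : ℂ} :
    z ∈ spectrum ℂ M ↔ (z • (1 : Matrix k k ℂ) - M).det = 0 := by
  rw [spectrum.mem_iff, Matrix.isUnit_iff_isUnit_det, isUnit_iff_ne_zero, not_not,
    Algebra.algebraMap_eq_smul_one]

lemma fromBlocks_sub {α : Type*} [SubtractionMonoid α] (A A' : Matrix k k α) (B B' : Matrix k l α)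
    (C C' : Matrix l k α) (D D' : Matrix l l α) :
    Matrix.fromBlocks A B C D - Matrix.fromBlocks A' B' C' D'
      = Matrix.fromBlocks (A - A') (B - B') (C - C') (D - D') := by
  ext (i|i) (j|j) <;> simp [Matrix.sub_apply]

lemma fromBlocks_isHurwitz {A : Matrix k k ℝ} {a : Matrix l l ℝ} (X : Matrix l k ℝ)
    (hA : A.IsHurwitz) (ha : a.IsHurwitz) :
    (Matrix.fromBlocks A (0 : Matrix k l ℝ) X a).IsHurwitz := by
  intro z hz
  have hmap : (Matrix.fromBlocks A (0 : Matrix k l ℝ) X a).map (algebraMap ℝ ℂ)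
      = Matrix.fromBlocks (A.map (algebraMap ℝ ℂ)) (0 : Matrix k l ℂ)
          (X.map (algebraMap ℝ ℂ)) (a.map (algebraMap ℝ ℂ)) := by
    rw [Matrix.fromBlocks_map,
      show ((0 : Matrix k l ℝ).map (algebraMap ℝ ℂ)) = (0 : Matrix k l ℂ) from by
        ext i j; simp]
  rw [hmap, mem_spectrum_iff_det] at hz
  have h1 : z • (1 : Matrix (k ⊕ l) (k ⊕ l) ℂ)
        - Matrix.fromBlocks (A.map (algebraMap ℝ ℂ)) 0 (X.map (algebraMap ℝ ℂ))
            (a.map (algebraMap ℝ ℂ))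
      = Matrix.fromBlocks (z • 1 - A.map (algebraMap ℝ ℂ)) 0
          (0 - X.map (algebraMap ℝ ℂ)) (z • 1 - a.map (algebraMap ℝ ℂ)) := by
    rw [← Matrix.fromBlocks_one, Matrix.fromBlocks_smul, fromBlocks_sub]
    congr 1 <;> simp
  rw [h1, Matrix.det_fromBlocks_zero₁₂] at hz
  rcases mul_eq_zero.mp hz with h | h
  · exact hA z (mem_spectrum_iff_det.mpr h)
  · exact ha z (mem_spectrum_iff_det.mpr h)

lemma trace_fromBlocks {α : Type*} [AddCommMonoid α] (A : Matrix k k α) (B : Matrix k l α)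
    (C : Matrix l k α) (D : Matrix l l α) :
    (Matrix.fromBlocks A B C D).trace = A.trace + D.trace := by
  simp [Matrix.trace, Fintype.sum_sum_type, Matrix.fromBlocks, Matrix.diag]

lemma symm_eq_zero_of_trace_mul_self {M : Matrix k k ℝ} (hsym : Mᵀ = M)
    (h : (M * M).trace = 0) : M = 0 := by
  have hswap : ∀ i j, M j i = M i j := by
    intro i j
    rw [← Matrix.transpose_apply M i j, hsym]
  have h2 : ∑ i, ∑ j, (M i j)^2 = 0 := by
    rw [← h]
    rw [Matrix.trace]
    refine (Finset.sum_congr rfl fun i _ => ?_).symm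
    rw [Matrix.diag_apply, Matrix.mul_apply]
    refine Finset.sum_congr rfl fun j _ => ?_
    rw [hswap i j, sq]
  ext i j
  have h3 : ∀ i ∈ Finset.univ, (0:ℝ) ≤ ∑ j, (M i j)^2 :=
    fun i _ => Finset.sum_nonneg fun j _ => sq_nonneg _
  have h4 := (Finset.sum_eq_zero_iff_of_nonneg h3).mp h2 i (Finset.mem_univ i)
  have h5 := (Finset.sum_eq_zero_iff_of_nonneg (fun j _ => sq_nonneg (M i j))).mp h4 j
    (Finset.mem_univ j)
  simpa using pow_eq_zero_iff (n := 2) (by norm_num) |>.mp h5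

end Blocks

section Glue

lemma value_ident {n' ν' : Type*} [Fintype n'] [DecidableEq n'] [Fintype ν'] [DecidableEq ν']
    (Qm Pm : Matrix (n' ⊕ ν') (n' ⊕ ν') ℝ) (hPmsym : Pmᵀ = Pm) (hQmsym : Qmᵀ = Qm)
    (ϑ δr : Matrix ν' ν' ℝ) (hϑ : ϑᵀ = -ϑ) (hδr : δrᵀ = δr) :
    (Qm * (Matrix.fromBlocks 0 0 0 ((2:ℝ) • (ϑ * δr)) * Pm
        + Pm * (Matrix.fromBlocks 0 0 0 ((2:ℝ) • (ϑ * δr)))ᵀ)).trace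
      = -4 * (((1/2 : ℝ) • (ϑ * (Qm * Pm).toBlocks₂₂ + (ϑ * (Qm * Pm).toBlocks₂₂)ᵀ))
          * δr).trace := by
  set E := Qm * Pm with hEdef
  set E22 := E.toBlocks₂₂ with hE22def
  set Δ : Matrix (n' ⊕ ν') (n' ⊕ ν') ℝ := Matrix.fromBlocks 0 0 0 ((2:ℝ) • (ϑ * δr)) with hΔdef
  have hPQ : Pm * Qm = Eᵀ := by rw [hEdef, Matrix.transpose_mul, hPmsym, hQmsym]
  -- LHS = 2 * (Eᵀ * Δ).trace
  have hstep1 : (Qm * (Δ * Pm + Pm * Δᵀ)).trace = (Eᵀ * Δ).trace + (E * Δᵀ).trace := by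
    rw [Matrix.mul_add, Matrix.trace_add]
    congr 1
    · rw [← Matrix.mul_assoc, Matrix.trace_mul_cycle Qm Δ Pm, hPQ]
    · rw [← Matrix.mul_assoc]
  have hstep2 : (E * Δᵀ).trace = (Eᵀ * Δ).trace := by
    rw [← Matrix.trace_transpose (E * Δᵀ), Matrix.transpose_mul, Matrix.transpose_transpose,
      Matrix.trace_mul_comm]
  -- block reduction
  have hblock : (Eᵀ * Δ).trace = (E22ᵀ * ((2:ℝ) • (ϑ * δr))).trace := by
    have hEblocks : E = Matrix.fromBlocks (E.toBlocks₁₁) (E.toBlocks₁₂)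
        (E.toBlocks₂₁) (E.toBlocks₂₂) := (Matrix.fromBlocks_toBlocks E).symm
    rw [show Eᵀ * Δ = (Matrix.fromBlocks (E.toBlocks₁₁) (E.toBlocks₁₂)
        (E.toBlocks₂₁) (E.toBlocks₂₂))ᵀ * Δ from by rw [← hEblocks]]
    rw [Matrix.fromBlocks_transpose, hΔdef, Matrix.fromBlocks_multiply, trace_fromBlocks]
    rw [← hE22def]
    simp
  -- final algebra
  have hT : (ϑ * E22 * δr).trace = -(E22ᵀ * (ϑ * δr)).trace := by
    rw [← Matrix.trace_transpose (ϑ * E22 * δr), Matrix.transpose_mul, Matrix.transpose_mul,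
      hδr, hϑ]
    rw [show δr * (E22ᵀ * -ϑ) = -(δr * (E22ᵀ * ϑ)) from by simp [Matrix.mul_neg]]
    rw [Matrix.trace_neg, Matrix.trace_mul_comm, Matrix.mul_assoc]
  have hT2 : ((ϑ * E22)ᵀ * δr).trace = -(E22ᵀ * (ϑ * δr)).trace := by
    rw [Matrix.transpose_mul, hϑ]
    rw [show E22ᵀ * -ϑ * δr = -(E22ᵀ * (ϑ * δr)) from by
      simp [Matrix.mul_neg, Matrix.neg_mul, Matrix.mul_assoc]]
    rw [Matrix.trace_neg]
  rw [hstep1, hstep2, hblock]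
  rw [Matrix.mul_smul, Matrix.trace_smul, Matrix.smul_mul, Matrix.trace_smul,
    Matrix.add_mul, Matrix.trace_add, hT, hT2]
  simp only [smul_eq_mul]
  ring

end Glue

end CQFAux

open CQFAux


/-- First-order sensitivity of the CQF cost `𝒵` with respect to the observer energy
matrix `r`: for every symmetric direction `δr`, the directional derivative exists and
equals `−4·trace(S(ϑE₂₂)·δr)`; in particular it vanishes for all symmetric `δr` iff
`ϑE₂₂` is antisymmetric. -/
theorem cqf_deriv_in_r {n ν q m' μ' p : ℕ}
    (hn : 0 < n) (hν : 0 < ν) (hq : 0 < q) (hm : 0 < m') (hμ : 0 < μ') (hp : 0 < p)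
    (hpm : p ≤ 2 * m')
    (Θ : Matrix (Fin n) (Fin n) ℝ) (hΘ : Θᵀ = -Θ)
    (R : Matrix (Fin n) (Fin n) ℝ) (hR : Rᵀ = R)
    (N : Matrix (Fin 2 × Fin m') (Fin n) ℝ)
    (ϑ : Matrix (Fin ν) (Fin ν) ℝ) (hϑ : ϑᵀ = -ϑ)
    (Pi : Matrix (Fin p) (Fin 2 × Fin m') ℝ)
    (N₂ : Matrix (Fin 2 × Fin μ') (Fin ν) ℝ)
    (F : Matrix (Fin q) (Fin n) ℝ) (G : Matrix (Fin q) (Fin ν) ℝ)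
    (r : Matrix (Fin ν) (Fin ν) ℝ) (hr : rᵀ = r)
    (N₁ : Matrix (Fin p) (Fin ν) ℝ)
    (hA : (Amat Θ R N).IsHurwitz) (ha : (amat ϑ Pi N₂ r N₁).IsHurwitz)
    (Pm Qm : Matrix (Fin n ⊕ Fin ν) (Fin n ⊕ Fin ν) ℝ)
    (hPm : calA Θ R N ϑ Pi N₂ r N₁ * Pm + Pm * (calA Θ R N ϑ Pi N₂ r N₁)ᵀ +
        calB Θ N ϑ Pi N₂ N₁ * (calB Θ N ϑ Pi N₂ N₁)ᵀ = 0)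
    (hQm : (calA Θ R N ϑ Pi N₂ r N₁)ᵀ * Qm + Qm * calA Θ R N ϑ Pi N₂ r N₁ +
        (calC F G)ᵀ * calC F G = 0) :
    (∀ δr : Matrix (Fin ν) (Fin ν) ℝ, δrᵀ = δr →
        HasDerivAt (fun ε : ℝ => Zcost Θ R N ϑ Pi N₂ F G (r + ε • δr) N₁)
          (-4 * (Smat (ϑ * (Qm * Pm).toBlocks₂₂) * δr).trace) 0) ∧
      ((∀ δr : Matrix (Fin ν) (Fin ν) ℝ, δrᵀ = δr →
          deriv (fun ε : ℝ => Zcost Θ R N ϑ Pi N₂ F G (r + ε • δr) N₁) 0 = 0) ↔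
        (ϑ * (Qm * Pm).toBlocks₂₂)ᵀ = -(ϑ * (Qm * Pm).toBlocks₂₂)) := by

  classical
  set A₀ : Matrix (Fin n ⊕ Fin ν) (Fin n ⊕ Fin ν) ℝ := calA Θ R N ϑ Pi N₂ r N₁ with hA₀def
  set SB : Matrix (Fin n ⊕ Fin ν) (Fin n ⊕ Fin ν) ℝ :=
    calB Θ N ϑ Pi N₂ N₁ * (calB Θ N ϑ Pi N₂ N₁)ᵀ with hSBdef
  set W : Matrix (Fin n ⊕ Fin ν) (Fin n ⊕ Fin ν) ℝ := (calC F G)ᵀ * calC F G with hWdef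
  have hSBsym : SBᵀ = SB := by rw [hSBdef, Matrix.transpose_mul, Matrix.transpose_transpose]
  have hWsym : Wᵀ = W := by rw [hWdef, Matrix.transpose_mul, Matrix.transpose_transpose]
  have hHur : A₀.IsHurwitz := by
    rw [hA₀def]
    unfold calA
    exact CQFAux.fromBlocks_isHurwitz _ hA ha
  obtain ⟨C, hC1, δ, hδpos, hdec⟩ := CQFAux.hurwitz_decay A₀ hHur
  have hC0 : (0:ℝ) ≤ C := by linarith
  have hPmsym : Pmᵀ = Pm := by
    have h1 : A₀ * Pmᵀ + Pmᵀ * A₀ᵀ + SB = 0 := by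
      have h := congrArg Matrix.transpose hPm
      simp only [Matrix.transpose_add, Matrix.transpose_mul, Matrix.transpose_transpose,
        Matrix.transpose_zero, hSBsym] at h
      abel_nf
      abel_nf at h
      rw [show A₀ * Pmᵀ + (Pmᵀ * A₀ᵀ + SB) = Pmᵀ * A₀ᵀ + (A₀ * Pmᵀ + SB) from by abel]
      exact h
    exact CQFAux.lyap_unique hC0 hδpos hdec h1 hPm
  have hdecT := CQFAux.decay_transpose hdec
  have hcardC0 : (0:ℝ) ≤ (Fintype.card (Fin n ⊕ Fin ν)) * C := by positivity
  have hQmT : A₀ᵀ * Qm + Qm * A₀ᵀᵀ + W = 0 := by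
    rw [Matrix.transpose_transpose]; exact hQm
  have hQmsym : Qmᵀ = Qm := by
    have h1 : A₀ᵀ * Qmᵀ + Qmᵀ * A₀ᵀᵀ + W = 0 := by
      have h := congrArg Matrix.transpose hQm
      simp only [Matrix.transpose_add, Matrix.transpose_mul, Matrix.transpose_transpose,
        Matrix.transpose_zero, hWsym] at h
      rw [Matrix.transpose_transpose]
      abel_nf
      abel_nf at h
      rw [show A₀ᵀ * Qmᵀ + (Qmᵀ * A₀ + W) = Qmᵀ * A₀ + (A₀ᵀ * Qmᵀ + W) from by abel]
      exact h
    exact CQFAux.lyap_unique hcardC0 hδpos hdecT h1 hQmT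
  have hmain : ∀ δr : Matrix (Fin ν) (Fin ν) ℝ, δrᵀ = δr →
      HasDerivAt (fun ε : ℝ => Zcost Θ R N ϑ Pi N₂ F G (r + ε • δr) N₁)
        (-4 * (Smat (ϑ * (Qm * Pm).toBlocks₂₂) * δr).trace) 0 := by
    intro δr hδr
    set Δ : Matrix (Fin n ⊕ Fin ν) (Fin n ⊕ Fin ν) ℝ :=
      Matrix.fromBlocks 0 0 0 ((2:ℝ) • (ϑ * δr)) with hΔdef
    have hAε : ∀ ε : ℝ, calA Θ R N ϑ Pi N₂ (r + ε • δr) N₁ = A₀ + ε • Δ := by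
      intro ε
      have hamat : amat ϑ Pi N₂ (r + ε • δr) N₁
          = amat ϑ Pi N₂ r N₁ + ε • ((2:ℝ) • (ϑ * δr)) := by
        unfold amat
        rw [show r + ε • δr + N₁ᵀ * Pi * Jmat m' * Piᵀ * N₁ + N₂ᵀ * Jmat μ' * N₂
            = (r + N₁ᵀ * Pi * Jmat m' * Piᵀ * N₁ + N₂ᵀ * Jmat μ' * N₂) + ε • δr from by abel]
        rw [Matrix.mul_add, Matrix.mul_smul, smul_add, smul_comm (2:ℝ) ε]
      rw [hA₀def]
      unfold calA
      rw [hamat, hΔdef]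
      rw [show (ε • Matrix.fromBlocks 0 0 0 ((2:ℝ) • (ϑ * δr)) :
            Matrix (Fin n ⊕ Fin ν) (Fin n ⊕ Fin ν) ℝ)
          = Matrix.fromBlocks 0 0 0 (ε • ((2:ℝ) • (ϑ * δr))) from by
        rw [Matrix.fromBlocks_smul]
        congr 1 <;> simp]
      rw [Matrix.fromBlocks_add]
      congr 1 <;> simp
    have hfun : (fun ε : ℝ => Zcost Θ R N ϑ Pi N₂ F G (r + ε • δr) N₁)
        = (fun ε : ℝ => (W * ∫ t in Set.Ioi (0:ℝ),
            NormedSpace.exp (t • (A₀ + ε • Δ)) * SB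
              * NormedSpace.exp (t • (A₀ + ε • Δ)ᵀ)).trace) := by
      funext ε
      unfold Zcost CQF.gram
      simp only [exp_bridge]
      rw [hAε ε, hWdef, hSBdef]
    have hd := CQFAux.main_deriv A₀ Δ SB W hHur Pm Qm hPm hQm
    rw [← hfun] at hd
    have hval := CQFAux.value_ident Qm Pm hPmsym hQmsym ϑ δr hϑ hδr
    rw [← hΔdef] at hval
    rw [hval] at hd
    unfold Smat
    exact hd
  refine ⟨hmain, ?_, ?_⟩
  · intro hzero
    set M : Matrix (Fin ν) (Fin ν) ℝ := ϑ * (Qm * Pm).toBlocks₂₂ with hMdef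
    have hSmsym : (Smat M)ᵀ = Smat M := by
      unfold Smat
      rw [Matrix.transpose_smul, Matrix.transpose_add, Matrix.transpose_transpose, add_comm]
    have h := hzero (Smat M) hSmsym
    rw [(hmain (Smat M) hSmsym).deriv] at h
    have htr : (Smat M * Smat M).trace = 0 := by linarith
    have hSm0 : Smat M = 0 := CQFAux.symm_eq_zero_of_trace_mul_self hSmsym htr
    unfold Smat at hSm0
    have h2 : M + Mᵀ = 0 := by
      rcases smul_eq_zero.mp hSm0 with h' | h'
      · norm_num at h'
      · exact h'
    rw [add_comm] at h2
    exact add_eq_zero_iff_eq_neg.mp h2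
  · intro hanti δr hδr
    have hSm0 : Smat (ϑ * (Qm * Pm).toBlocks₂₂) = 0 := by
      unfold Smat
      rw [hanti]
      simp
    rw [(hmain δr hδr).deriv, hSm0]
    simp
end
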